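/- arXiv:2410.07729 — 6 statements merged into one kernel-verified Lean document; each statement's English description precedes it below -/
import Mathlib

section
/- Let n ≥ 2 be an integer and c a nonzero real number, with n odd or (n even and c < 0), and let k be a natural number with 1 ≤ k ≤ ⌊n/2⌋. Then the function y : ℂ → ℂ defined by y(x) = ∫₀^∞ e^{-(-c)^{n-1} w^n/n} ( e^{-c w x} - e^{-c w x a_k} cos(c w x b_k - 2kπ/n) ) dw satisfies the ordinary differential equation y^{(n-1)}(x) + c·x·y(x) = 0 for every x ∈ ℂ. -/
/-!
Put `A = (-c)ⁿ⁻¹ > 0` and `M_j(z) = ∫₀^∞ wʲ e^{-A wⁿ/n - z w} dw`. Differentiating under the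
integral sign gives `M_j' = -M_{j+1}`, and integrating `d/dw e^{-A wⁿ/n - z w}` over `(0, ∞)`
gives `A M_{n-1}(z) = 1 - z M_0(z)`. Hence for every `n`-th root of unity `l` the function
`f_l(x) = M_0(c l x)` solves `f_l⁽ⁿ⁻¹⁾ + c x f_l = l⁻¹`. Expanding the cosine into exponentials,
`y = f_1 - (μ⁻¹/2) f_{μ⁻¹} - (μ/2) f_μ` with `μ = e^{2πik/n}`, and the right-hand sides cancel:
`1 - μ⁻¹ μ / 2 - μ μ⁻¹ / 2 = 0`.
-/

open MeasureTheory Real Set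
open Filter Topology
open scoped Complex
open Complex (I)

section LaplaceMoment

variable {A : ℝ} {n : ℕ}

theorem exists_exp_mul_sub_pow_le (hA : 0 < A) (hn : 2 ≤ n) (K : ℝ) :
    ∃ C, ∀ w, 0 ≤ w → rexp (K * w - A * w ^ n / n) ≤ C * rexp (-w) := by
  set a := A / n
  have ha : 0 < a := by positivity
  refine ⟨rexp ((K + 1) ^ 2 / (4 * a) + a), fun w hw => ?_⟩
  have h_pow : a * w ^ 2 - a ≤ A * w ^ n / n := by
    rw [show A * w ^ n / n = a * w ^ n by ring]
    rcases le_total 1 w with h | h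
    · nlinarith [pow_le_pow_right₀ h hn]
    · nlinarith [mul_nonneg ha.le (pow_nonneg hw n), pow_le_one₀ hw h (n := 2)]
  have h_sq : (K + 1) * w - a * w ^ 2 ≤ (K + 1) ^ 2 / (4 * a) := by
    rw [le_div_iff₀ (by positivity)]
    nlinarith [sq_nonneg (K + 1 - 2 * a * w)]
  rw [← exp_add]
  gcongr
  linarith

theorem integrableOn_pow_mul_exp_mul_sub_pow (hA : 0 < A) (hn : 2 ≤ n) (j : ℕ) (K : ℝ) :
    IntegrableOn (fun w => w ^ j * rexp (K * w - A * w ^ n / n)) (Ioi 0) := by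
  obtain ⟨C, hC⟩ := exists_exp_mul_sub_pow_le hA hn (K + j)
  refine ((exp_neg_integrableOn_Ioi 0 one_pos).const_mul C).mono' (by fun_prop) ?_
  filter_upwards [ae_restrict_mem measurableSet_Ioi] with w hw
  have hw : 0 ≤ w := le_of_lt hw
  have h_pow : w ^ j ≤ rexp (j * w) := by
    rw [exp_nat_mul]
    gcongr
    linarith [add_one_le_exp w]
  calc ‖w ^ j * rexp (K * w - A * w ^ n / n)‖
      = w ^ j * rexp (K * w - A * w ^ n / n) := by
        rw [Real.norm_of_nonneg (by positivity)]
    _ ≤ rexp (j * w) * rexp (K * w - A * w ^ n / n) := by gcongr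
    _ = rexp ((K + j) * w - A * w ^ n / n) := by rw [← exp_add]; ring_nf
    _ ≤ C * rexp (-1 * w) := by rw [neg_one_mul]; exact hC w hw

theorem tendsto_exp_mul_sub_pow_atTop (hA : 0 < A) (hn : 2 ≤ n) (K : ℝ) :
    Tendsto (fun w => rexp (K * w - A * w ^ n / n)) atTop (𝓝 0) := by
  obtain ⟨C, hC⟩ := exists_exp_mul_sub_pow_le hA hn K
  refine squeeze_zero' (Eventually.of_forall fun w => (exp_pos _).le) ?_
    (by simpa using tendsto_exp_neg_atTop_nhds_zero.const_mul C)
  filter_upwards [eventually_ge_atTop 0] with w hw using hC w hw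

noncomputable def laplaceMoment (A : ℝ) (n j : ℕ) (z : ℂ) : ℂ :=
  ∫ w in Ioi (0 : ℝ), (w : ℂ) ^ j * cexp (-A * (w : ℂ) ^ n / n - z * w)

theorem norm_cexp_neg_pow_sub (w : ℝ) (z : ℂ) :
    ‖cexp (-A * (w : ℂ) ^ n / n - z * w)‖ = rexp (-z.re * w - A * w ^ n / n) := by
  rw [Complex.norm_exp,
    show -A * (w : ℂ) ^ n / n - z * w = ((-(A * w ^ n / n) : ℝ) : ℂ) - z * w by push_cast; ring]
  simp only [Complex.sub_re, Complex.ofReal_re, Complex.mul_re, Complex.ofReal_im]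
  ring_nf

theorem norm_pow_mul_cexp_neg_pow_sub {w : ℝ} (hw : 0 ≤ w) (j : ℕ) (z : ℂ) :
    ‖(w : ℂ) ^ j * cexp (-A * (w : ℂ) ^ n / n - z * w)‖
      = w ^ j * rexp (-z.re * w - A * w ^ n / n) := by
  rw [norm_mul, norm_pow, Complex.norm_real, Real.norm_of_nonneg hw, norm_cexp_neg_pow_sub]

theorem integrableOn_pow_mul_cexp_neg_pow_sub (hA : 0 < A) (hn : 2 ≤ n) (j : ℕ) (z : ℂ) :
    IntegrableOn (fun w : ℝ => (w : ℂ) ^ j * cexp (-A * (w : ℂ) ^ n / n - z * w)) (Ioi 0) := by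
  refine (integrableOn_pow_mul_exp_mul_sub_pow hA hn j (-z.re)).mono' (by fun_prop) ?_
  filter_upwards [ae_restrict_mem measurableSet_Ioi] with w hw
  rw [norm_pow_mul_cexp_neg_pow_sub hw.le]

theorem hasDerivAt_laplaceMoment (hA : 0 < A) (hn : 2 ≤ n) (j : ℕ) (z : ℂ) :
    HasDerivAt (laplaceMoment A n j) (-laplaceMoment A n (j + 1) z) z := by
  have h_deriv : ∀ w : ℝ, ∀ ζ : ℂ,
      HasDerivAt (fun ζ => (w : ℂ) ^ j * cexp (-A * (w : ℂ) ^ n / n - ζ * w))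
        (-((w : ℂ) ^ (j + 1) * cexp (-A * (w : ℂ) ^ n / n - ζ * w))) ζ := by
    intro w ζ
    refine ((((hasDerivAt_id ζ).mul_const (w : ℂ)).const_sub
      (-A * (w : ℂ) ^ n / n)).cexp.const_mul ((w : ℂ) ^ j)).congr_deriv ?_
    simp only [id]
    ring
  have h_bound : ∀ w : ℝ, 0 < w → ∀ ζ ∈ Metric.ball z 1,
      ‖-((w : ℂ) ^ (j + 1) * cexp (-A * (w : ℂ) ^ n / n - ζ * w))‖
        ≤ w ^ (j + 1) * rexp ((‖z‖ + 1) * w - A * w ^ n / n) := by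
    intro w hw ζ hζ
    rw [norm_neg, norm_pow_mul_cexp_neg_pow_sub hw.le]
    have : -ζ.re ≤ ‖z‖ + 1 := by
      have := norm_le_norm_add_norm_sub' ζ z
      linarith [neg_le_of_abs_le (Complex.abs_re_le_norm ζ), mem_ball_iff_norm.1 hζ]
    gcongr
  have key := hasDerivAt_integral_of_dominated_loc_of_deriv_le (μ := volume.restrict (Ioi 0))
    (Metric.ball_mem_nhds z one_pos)
    (Eventually.of_forall fun ζ =>
      (integrableOn_pow_mul_cexp_neg_pow_sub hA hn j ζ).aestronglyMeasurable)
    (integrableOn_pow_mul_cexp_neg_pow_sub hA hn j z)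
    (integrableOn_pow_mul_cexp_neg_pow_sub hA hn (j + 1) z).neg.aestronglyMeasurable
    (by filter_upwards [ae_restrict_mem measurableSet_Ioi] with w hw using h_bound w hw)
    (integrableOn_pow_mul_exp_mul_sub_pow hA hn (j + 1) (‖z‖ + 1))
    (by filter_upwards with w ζ _ using h_deriv w ζ)
  have := key.2
  rwa [integral_neg] at this

theorem laplaceMoment_integration_by_parts (hA : 0 < A) (hn : 2 ≤ n) (z : ℂ) :
    A * laplaceMoment A n (n - 1) z = 1 - z * laplaceMoment A n 0 z := by
  set f : ℝ → ℂ := fun w => cexp (-A * (w : ℂ) ^ n / n - z * w)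
  have h_deriv : ∀ w : ℝ, HasDerivAt f
      (-A * ((w : ℂ) ^ (n - 1) * f w) - z * ((w : ℂ) ^ 0 * f w)) w := by
    intro w
    have h_poly : HasDerivAt (fun ζ : ℂ => -A * ζ ^ n / n - z * ζ)
        (-A * (n * (w : ℂ) ^ (n - 1)) / n - z * 1) w :=
      (((hasDerivAt_pow n _).const_mul _).div_const _).sub ((hasDerivAt_id _).const_mul z)
    have hn0 : (n : ℂ) ≠ 0 := by exact_mod_cast (show n ≠ 0 by omega)
    refine h_poly.comp_ofReal.cexp.congr_deriv ?_
    rw [show -(A : ℂ) * (n * (w : ℂ) ^ (n - 1)) / n = -A * (w : ℂ) ^ (n - 1) by field_simp]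
    simp only [f]
    ring
  have h_int := ((integrableOn_pow_mul_cexp_neg_pow_sub hA hn (n - 1) z).const_mul (-(A : ℂ))).sub
    ((integrableOn_pow_mul_cexp_neg_pow_sub hA hn 0 z).const_mul z)
  have h_ibp := integral_Ioi_of_hasDerivAt_of_tendsto (by fun_prop) (fun w _ => h_deriv w) h_int
    (tendsto_zero_iff_norm_tendsto_zero.2 ?_)
  · have hf0 : f 0 = 1 := by simp [f, zero_pow (show n ≠ 0 by omega)]
    rw [integral_sub ((integrableOn_pow_mul_cexp_neg_pow_sub hA hn (n - 1) z).const_mul _)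
      ((integrableOn_pow_mul_cexp_neg_pow_sub hA hn 0 z).const_mul _), integral_const_mul,
      integral_const_mul, hf0] at h_ibp
    unfold laplaceMoment
    linear_combination -h_ibp
  · simpa only [f, norm_cexp_neg_pow_sub] using tendsto_exp_mul_sub_pow_atTop hA hn (-z.re)

theorem iteratedDeriv_laplaceMoment (hA : 0 < A) (hn : 2 ≤ n) (m : ℕ) :
    iteratedDeriv m (laplaceMoment A n 0) = fun z => (-1) ^ m * laplaceMoment A n m z := by
  induction m with
  | zero => simp
  | succ m ih =>
    ext z
    rw [iteratedDeriv_succ, ih,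
      deriv_const_mul _ (hasDerivAt_laplaceMoment hA hn m z).differentiableAt,
      (hasDerivAt_laplaceMoment hA hn m z).deriv]
    ring

theorem differentiable_laplaceMoment (hA : 0 < A) (hn : 2 ≤ n) (j : ℕ) :
    Differentiable ℂ (laplaceMoment A n j) :=
  fun z => (hasDerivAt_laplaceMoment hA hn j z).differentiableAt

theorem iteratedDeriv_laplaceMoment_comp_mul_add {c l : ℂ} (hA : 0 < A)
    (hn : 2 ≤ n) (hAc : (A : ℂ) = (-c) ^ (n - 1)) (hl : l ^ n = 1) (x : ℂ) :
    iteratedDeriv (n - 1) (fun x => laplaceMoment A n 0 (c * l * x)) x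
      + c * x * laplaceMoment A n 0 (c * l * x) = l⁻¹ := by
  have hl0 : l ≠ 0 := by rintro rfl; simp [zero_pow (show n ≠ 0 by omega)] at hl
  have hl_pow : l ^ (n - 1) = l⁻¹ := by
    refine eq_inv_of_mul_eq_one_left ?_
    rw [← pow_succ, Nat.sub_add_cancel (by omega), hl]
  rw [iteratedDeriv_comp_const_mul (differentiable_laplaceMoment hA hn 0).contDiff,
    iteratedDeriv_laplaceMoment hA hn]
  have h_ibp := laplaceMoment_integration_by_parts hA hn (c * l * x)
  rw [hAc] at h_ibp
  have h_pow : (c * l) ^ (n - 1) * (-1) ^ (n - 1) = (-c) ^ (n - 1) * l⁻¹ := by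
    rw [← hl_pow]; ring
  linear_combination l⁻¹ * h_ibp - c * x * laplaceMoment A n 0 (c * l * x) * mul_inv_cancel₀ hl0
    + laplaceMoment A n (n - 1) (c * l * x) * h_pow

theorem cexp_neg_mul_cos_mul_cos_sub (z t : ℂ) :
    cexp (-z * Complex.cos t) * Complex.cos (z * Complex.sin t - t)
      = (cexp (-(t * I)) * cexp (-z * cexp (-(t * I)))
        + cexp (t * I) * cexp (-z * cexp (t * I))) / 2 := by
  have h_neg : cexp (-(t * I)) = Complex.cos t - Complex.sin t * I := by
    rw [← neg_mul, Complex.exp_mul_I, Complex.cos_neg, Complex.sin_neg, neg_mul, sub_eq_add_neg]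
  rw [← Complex.exp_add, ← Complex.exp_add, h_neg, Complex.exp_mul_I,
    Complex.cos.eq_1 (z * Complex.sin t - t), mul_div_assoc', mul_add, ← Complex.exp_add,
    ← Complex.exp_add]
  ring_nf

theorem integral_cexp_neg_pow_mul_sub_eq_laplaceMoment (hA : 0 < A) (hn : 2 ≤ n)
    (c t x : ℂ) :
    ∫ w in Ioi (0 : ℝ), cexp (-A * (w : ℂ) ^ n / n) *
        (cexp (-c * w * x) - cexp (-c * w * x * Complex.cos t) *
          Complex.cos (c * w * x * Complex.sin t - t))
      = laplaceMoment A n 0 (c * x)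
        - (cexp (t * I))⁻¹ / 2 * laplaceMoment A n 0 (c * (cexp (t * I))⁻¹ * x)
        - cexp (t * I) / 2 * laplaceMoment A n 0 (c * cexp (t * I) * x) := by
  have h_int := fun s => integrableOn_pow_mul_cexp_neg_pow_sub hA hn 0 (s * x)
  simp only [laplaceMoment]
  rw [← integral_const_mul, ← integral_const_mul,
    ← integral_sub (h_int _) ((h_int _).const_mul _),
    ← integral_sub ((h_int _).sub' ((h_int _).const_mul _)) ((h_int _).const_mul _)]
  refine integral_congr_ae (Eventually.of_forall fun w => ?_)
  have h_trig := cexp_neg_mul_cos_mul_cos_sub (c * w * x) t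
  rw [Complex.exp_neg] at h_trig
  simp only [show -c * w * x * Complex.cos t = -(c * w * x) * Complex.cos t by ring, h_trig,
    pow_zero, one_mul, sub_eq_add_neg (-(A : ℂ) * _ / _), Complex.exp_add]
  ring_nf

end LaplaceMoment

theorem cexp_two_mul_mul_pi_div_mul_I_pow_eq_one (k : ℕ) {n : ℕ} (hn : n ≠ 0) :
    cexp ((2 * k * π / n : ℝ) * I) ^ n = 1 := by
  rw [← Complex.exp_nat_mul, ← Complex.exp_nat_mul_two_pi_mul_I k]
  congr 1
  push_cast
  field_simp

theorem airy_type_ode_y_plus_general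
    (n : ℕ) (hn : 2 ≤ n) (c : ℝ) (hc : c ≠ 0)
    (hcase : Odd n ∨ (Even n ∧ c < 0))
    (k : ℕ)
    (y : ℂ → ℂ)
    (hy : ∀ x : ℂ, y x =
      ∫ w in Ioi (0 : ℝ),
        Complex.exp (-(-(c : ℂ)) ^ (n - 1) * (w : ℂ) ^ n / n) *
          (Complex.exp (-(c : ℂ) * w * x)
            - Complex.exp (-(c : ℂ) * w * x * (Real.cos (2 * k * π / n) : ℝ)) *
              Complex.cos ((c : ℂ) * w * x * (Real.sin (2 * k * π / n) : ℝ)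
                - (2 * k * π / n : ℝ)))) :
    ∀ x : ℂ, iteratedDeriv (n - 1) y x + (c : ℂ) * x * y x = 0 := by
  set A := (-c) ^ (n - 1)
  have hA : 0 < A := by
    rcases hcase with h_odd | ⟨-, hc_neg⟩
    · exact (Nat.Odd.sub_odd h_odd odd_one).pow_pos (neg_ne_zero.2 hc)
    · exact pow_pos (neg_pos.2 hc_neg) _
  have hAc : (A : ℂ) = (-(c : ℂ)) ^ (n - 1) := by push_cast [A]; ring
  set μ := cexp ((2 * k * π / n : ℝ) * I)
  have hμ : μ ^ n = 1 := cexp_two_mul_mul_pi_div_mul_I_pow_eq_one k (by omega)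
  have hy_eq : y = fun x => laplaceMoment A n 0 (c * x)
      - μ⁻¹ / 2 * laplaceMoment A n 0 (c * μ⁻¹ * x) - μ / 2 * laplaceMoment A n 0 (c * μ * x) := by
    ext x
    rw [hy x, ← hAc, ← integral_cexp_neg_pow_mul_sub_eq_laplaceMoment hA hn]
    push_cast
    rfl
  intro x
  have h_one := iteratedDeriv_laplaceMoment_comp_mul_add hA hn hAc (one_pow n) x
  have h_inv := iteratedDeriv_laplaceMoment_comp_mul_add hA hn hAc
    (by rw [inv_pow, hμ, inv_one]) x
  have h_μ := iteratedDeriv_laplaceMoment_comp_mul_add hA hn hAc hμ x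
  simp only [mul_one, inv_one] at h_one
  rw [inv_inv] at h_inv
  have hM : ContDiff ℂ (n - 1 : ℕ) (laplaceMoment A n 0) :=
    (differentiable_laplaceMoment hA hn 0).contDiff
  rw [hy_eq, iteratedDeriv_fun_sub, iteratedDeriv_fun_sub, iteratedDeriv_const_mul,
    iteratedDeriv_const_mul]
  · linear_combination h_one - μ⁻¹ / 2 * h_inv - μ / 2 * h_μ
      - mul_inv_cancel₀ (Complex.exp_ne_zero _)
  all_goals fun_prop

theorem airy_type_ode_y_plus
    (n : ℕ) (hn : 2 ≤ n) (c : ℝ) (hc : c ≠ 0)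
    (hcase : Odd n ∨ (Even n ∧ c < 0))
    (k : ℕ) (hk1 : 1 ≤ k) (hk2 : k ≤ n / 2)
    (y : ℂ → ℂ)
    (hy : ∀ x : ℂ, y x =
      ∫ w in Ioi (0 : ℝ),
        Complex.exp (-(-(c : ℂ)) ^ (n - 1) * (w : ℂ) ^ n / n) *
          (Complex.exp (-(c : ℂ) * w * x)
            - Complex.exp (-(c : ℂ) * w * x * (Real.cos (2 * k * π / n) : ℝ)) *
              Complex.cos ((c : ℂ) * w * x * (Real.sin (2 * k * π / n) : ℝ)
                - (2 * k * π / n : ℝ)))) :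
    ∀ x : ℂ, iteratedDeriv (n - 1) y x + (c : ℂ) * x * y x = 0 :=
  airy_type_ode_y_plus_general n hn c hc hcase k y hy
end

section
/- Let n ≥ 2 be an integer and c a nonzero real number, with n odd or (n even and c < 0), and let k be a natural number with 1 ≤ k ≤ ⌊n/2⌋. Then the function y : ℂ → ℂ defined by y(x) = -∫₀^∞ e^{-(-c)^{n-1} w^n/n - c w x a_k} sin(c w x b_k - 2kπ/n) dw satisfies the ordinary differential equation y^{(n-1)}(x) + c·x·y(x) = 0 for every x ∈ ℂ. -/
/-!
Put `A = (-c)^(n-1) > 0`, `ζ = exp(2πik/n)`, `E = exp(-A wⁿ/n - cμx w)` and `f_μ(x) = ∫₀^∞ E dw`.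
Writing `sin` through exponentials gives `y = (i/2)(ζ⁻¹ f_{ζ⁻¹} - ζ f_ζ)`. Differentiating under
the integral, `f_μ^{(n-1)}(x) = (-cμ)^{n-1} ∫₀^∞ w^{n-1} E = A μ^{n-1} ∫₀^∞ w^{n-1} E`,
while integrating `d/dw (-E) = (A w^{n-1} + cμx) E` over `(0, ∞)` gives
`A ∫₀^∞ w^{n-1} E + cμx f_μ(x) = 1`. For `μⁿ = 1` these combine to
`μ (f_μ^{(n-1)} + c x f_μ) = 1`, and the contributions of `ζ` and `ζ⁻¹` to `y` cancel.
-/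

open MeasureTheory Real Set
open Filter Complex

section

lemma exists_neg_mul_pow_add_mul_le {B : ℝ} (hB : 0 < B) {n : ℕ} (hn : 2 ≤ n) (r : ℝ) :
    ∃ C, ∀ w : ℝ, 0 ≤ w → -B * w ^ n + r * w ≤ C - B / 2 * w ^ 2 := by
  refine ⟨|r| + B / 2 + r ^ 2 / (2 * B), fun w hw => ?_⟩
  have hsq : 0 ≤ r ^ 2 / (2 * B) - (r * w - B / 2 * w ^ 2) := by
    rw [show r ^ 2 / (2 * B) - (r * w - B / 2 * w ^ 2) = (r - B * w) ^ 2 / (2 * B) by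
      field_simp; ring]
    positivity
  rcases le_total w 1 with hw1 | hw1
  · have : 0 ≤ B * w ^ n := by positivity
    have : r * w ≤ |r| := by nlinarith [le_abs_self r, abs_nonneg r]
    have : B / 2 * w ^ 2 ≤ B / 2 :=
      mul_le_of_le_one_right (by positivity) (pow_le_one₀ hw hw1)
    have : 0 ≤ r ^ 2 / (2 * B) := by positivity
    linarith
  · have : B * w ^ 2 ≤ B * w ^ n := by gcongr
    nlinarith [abs_nonneg r]

lemma integrableOn_pow_mul_exp_neg_mul_pow_add {B : ℝ} (hB : 0 < B) {n : ℕ} (hn : 2 ≤ n)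
    (j : ℕ) (r : ℝ) :
    IntegrableOn (fun w : ℝ => w ^ j * rexp (-B * w ^ n + r * w)) (Ioi 0) := by
  obtain ⟨C, hC⟩ := exists_neg_mul_pow_add_mul_le hB hn r
  have hgauss : IntegrableOn (fun w : ℝ => w ^ j * rexp (-(B / 2) * w ^ 2)) (Ioi 0) := by
    simpa [Real.rpow_natCast] using integrableOn_rpow_mul_exp_neg_mul_sq (half_pos hB)
      (s := j) (by linarith [(j.cast_nonneg : (0 : ℝ) ≤ j)])
  refine (hgauss.const_mul (rexp C)).mono' (by fun_prop) ?_
  filter_upwards [ae_restrict_mem measurableSet_Ioi] with w (hw : 0 < w)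
  rw [Real.norm_of_nonneg (by positivity)]
  calc w ^ j * rexp (-B * w ^ n + r * w) ≤ w ^ j * rexp (C + -(B / 2) * w ^ 2) :=
        mul_le_mul_of_nonneg_left (Real.exp_le_exp.mpr (by linarith [hC w hw.le])) (by positivity)
    _ = rexp C * (w ^ j * rexp (-(B / 2) * w ^ 2)) := by rw [Real.exp_add]; ring

lemma norm_pow_mul_cexp_le {A : ℝ} {n j : ℕ} {s : ℂ} {r : ℝ} (hs : ‖s‖ ≤ r) {w : ℝ}
    (hw : 0 ≤ w) :
    ‖(w : ℂ) ^ j * cexp (-A * w ^ n / n - s * w)‖ ≤ w ^ j * rexp (-(A / n) * w ^ n + r * w) := by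
  have hre : (-A * w ^ n / n - s * w : ℂ).re = -(A / n) * w ^ n - s.re * w := by
    rw [show (-A * w ^ n / n - s * w : ℂ) = ((-(A / n) * w ^ n : ℝ) : ℂ) - s * w by push_cast; ring,
      sub_re, ofReal_re, re_mul_ofReal]
  rw [norm_mul, norm_pow, norm_real, Real.norm_of_nonneg hw, norm_exp, hre]
  have : -s.re ≤ r := (neg_le_abs _).trans ((abs_re_le_norm s).trans hs)
  gcongr
  nlinarith

variable {A : ℝ} {n : ℕ}

lemma integrableOn_pow_mul_cexp (hA : 0 < A) (hn : 2 ≤ n) (j : ℕ) (s : ℂ) :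
    IntegrableOn (fun w : ℝ => (w : ℂ) ^ j * cexp (-A * w ^ n / n - s * w)) (Ioi 0) := by
  refine (integrableOn_pow_mul_exp_neg_mul_pow_add (B := A / n) (by positivity) hn j ‖s‖).mono'
    (by fun_prop) ?_
  filter_upwards [ae_restrict_mem measurableSet_Ioi] with w (hw : 0 < w)
  exact norm_pow_mul_cexp_le le_rfl hw.le

noncomputable def airyMoment (A : ℝ) (n j : ℕ) (s : ℂ) : ℂ :=
  ∫ w in Ioi (0 : ℝ), (w : ℂ) ^ j * cexp (-A * w ^ n / n - s * w)

lemma hasDerivAt_airyMoment (hA : 0 < A) (hn : 2 ≤ n) (j : ℕ) (s₀ : ℂ) :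
    HasDerivAt (airyMoment A n j) (-airyMoment A n (j + 1) s₀) s₀ := by
  have key := hasDerivAt_integral_of_dominated_loc_of_deriv_le (μ := volume.restrict (Ioi 0))
    (F := fun s (w : ℝ) => (w : ℂ) ^ j * cexp (-A * w ^ n / n - s * w))
    (F' := fun s (w : ℝ) => -((w : ℂ) ^ (j + 1) * cexp (-A * w ^ n / n - s * w)))
    (bound := fun w => w ^ (j + 1) * rexp (-(A / n) * w ^ n + (‖s₀‖ + 1) * w))
    (Metric.ball_mem_nhds s₀ one_pos) (Eventually.of_forall fun _ => by fun_prop)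
    (integrableOn_pow_mul_cexp hA hn j s₀) (by fun_prop) ?_
    (integrableOn_pow_mul_exp_neg_mul_pow_add (by positivity) hn (j + 1) _) ?_
  · rw [airyMoment, ← integral_neg]
    exact key.2
  · filter_upwards [ae_restrict_mem measurableSet_Ioi] with w (hw : 0 < w) s hs
    rw [norm_neg]
    refine norm_pow_mul_cexp_le ?_ hw.le
    have : ‖s - s₀‖ < 1 := by simpa [dist_eq_norm] using hs
    linarith [norm_le_norm_add_norm_sub' s s₀]
  · filter_upwards with w s _
    refine ((((hasDerivAt_id s).mul_const (w : ℂ)).const_sub (-A * w ^ n / n : ℂ)).cexp.const_mul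
      ((w : ℂ) ^ j)).congr_deriv ?_
    simp only [id]
    ring

lemma airyMoment_integration_by_parts (hA : 0 < A) (hn : 2 ≤ n) (s : ℂ) :
    A * airyMoment A n (n - 1) s + s * airyMoment A n 0 s = 1 := by
  have hn0 : (n : ℂ) ≠ 0 := by exact_mod_cast (by omega : n ≠ 0)
  have hK := integrableOn_pow_mul_cexp hA hn (s := s)
  have hderiv : ∀ z : ℂ, HasDerivAt (fun z => -cexp (-A * z ^ n / n - s * z))
      (A * (z ^ (n - 1) * cexp (-A * z ^ n / n - s * z)) +
        s * (z ^ 0 * cexp (-A * z ^ n / n - s * z))) z := by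
    intro z
    refine ((((hasDerivAt_pow n z).const_mul (-(A : ℂ))).div_const (n : ℂ)).sub
      ((hasDerivAt_id z).const_mul s)).cexp.neg.congr_deriv ?_
    simp only [Pi.sub_apply, id]
    field_simp
    ring
  have hK' := ((hK (n - 1)).const_mul (A : ℂ)).add ((hK 0).const_mul s)
  have hlim := tendsto_zero_of_hasDerivAt_of_integrableOn_Ioi (fun w _ => (hderiv w).comp_ofReal)
    hK' (by simpa using (hK 0).neg)
  have hftc := integral_Ioi_of_hasDerivAt_of_tendsto' (fun w _ => (hderiv w).comp_ofReal) hK' hlim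
  rw [integral_add ((hK _).const_mul _) ((hK 0).const_mul s), integral_const_mul,
    integral_const_mul] at hftc
  simpa [zero_pow (by omega : n ≠ 0), airyMoment] using hftc

lemma iteratedDeriv_eq_of_hasDerivAt_succ {𝕜 E : Type*} [NontriviallyNormedField 𝕜]
    [NormedAddCommGroup E] [NormedSpace 𝕜 E] {F : ℕ → 𝕜 → E}
    (hF : ∀ j x, HasDerivAt (F j) (F (j + 1) x) x) (j : ℕ) :
    iteratedDeriv j (F 0) = F j := by
  induction j with
  | zero => exact iteratedDeriv_zero
  | succ j ih => rw [iteratedDeriv_succ, ih]; exact funext fun x => (hF j x).deriv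

noncomputable def airyMode (A : ℝ) (n : ℕ) (a : ℂ) (j : ℕ) (x : ℂ) : ℂ :=
  (-a) ^ j * airyMoment A n j (a * x)

lemma hasDerivAt_airyMode (hA : 0 < A) (hn : 2 ≤ n) (a : ℂ) (j : ℕ) (x : ℂ) :
    HasDerivAt (airyMode A n a j) (airyMode A n a (j + 1) x) x := by
  refine (((hasDerivAt_airyMoment hA hn j (a * x)).comp x
    ((hasDerivAt_id x).const_mul a)).const_mul ((-a) ^ j)).congr_deriv ?_
  simp only [airyMode]
  ring

lemma airyMode_ode (hA : 0 < A) (hn : 2 ≤ n) {c : ℝ} (hcA : (-c) ^ (n - 1) = A) {μ : ℂ}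
    (hμ : μ ^ n = 1) (x : ℂ) :
    μ * (airyMode A n (c * μ) (n - 1) x + c * x * airyMode A n (c * μ) 0 x) = 1 := by
  have hibp := airyMoment_integration_by_parts hA hn (c * μ * x)
  have hpow : (-(c * μ)) ^ (n - 1) = A * μ ^ (n - 1) := by
    rw [← hcA]; push_cast; ring
  have hμ' : μ * μ ^ (n - 1) = 1 := by rw [← pow_succ', Nat.sub_add_cancel (by omega), hμ]
  simp only [airyMode, pow_zero, one_mul, hpow]
  linear_combination hibp + A * airyMoment A n (n - 1) (c * μ * x) * hμ'

lemma neg_cexp_mul_sin_eq (P u : ℂ) (θ : ℝ) :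
    -(cexp (P - u * Real.cos θ) * Complex.sin (u * Real.sin θ - θ)) =
      I / 2 * ((cexp (θ * I))⁻¹ * cexp (P - u * (cexp (θ * I))⁻¹) -
        cexp (θ * I) * cexp (P - u * cexp (θ * I))) := by
  have hζ : cexp (θ * I) = Real.cos θ + Real.sin θ * I := by
    rw [exp_mul_I, ofReal_cos, ofReal_sin]
  have hζinv : cexp (-(θ * I)) = Real.cos θ - Real.sin θ * I := by
    rw [← neg_mul, exp_mul_I, Complex.cos_neg, Complex.sin_neg, ofReal_cos, ofReal_sin]
    ring
  have h₁ : (cexp (θ * I))⁻¹ * cexp (P - u * (cexp (θ * I))⁻¹) =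
      cexp (P - u * Real.cos θ) * cexp ((u * Real.sin θ - θ) * I) := by
    rw [← Complex.exp_neg, ← Complex.exp_add, ← Complex.exp_add, hζinv]
    ring_nf
  have h₂ : cexp (θ * I) * cexp (P - u * cexp (θ * I)) =
      cexp (P - u * Real.cos θ) * cexp (-(u * Real.sin θ - θ) * I) := by
    conv_lhs => rw [← Complex.exp_add]; rw [hζ]
    rw [← Complex.exp_add]
    ring_nf
  rw [h₁, h₂, Complex.sin]
  ring

lemma neg_integral_cexp_mul_sin_eq (hA : 0 < A) (hn : 2 ≤ n) (c θ : ℝ) (x : ℂ) :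
    -∫ w in Ioi (0 : ℝ), cexp (-A * w ^ n / n - c * w * x * Real.cos θ) *
        Complex.sin (c * w * x * Real.sin θ - θ) =
      I / 2 * ((cexp (θ * I))⁻¹ * airyMode A n (c * (cexp (θ * I))⁻¹) 0 x -
        cexp (θ * I) * airyMode A n (c * cexp (θ * I)) 0 x) := by
  have hK (μ : ℂ) := (integrableOn_pow_mul_cexp hA hn 0 (c * μ * x)).const_mul μ
  have hpointwise (w : ℝ) :
      -(cexp (-A * w ^ n / n - c * w * x * Real.cos θ) * Complex.sin (c * w * x * Real.sin θ - θ)) =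
        I / 2 * ((cexp (θ * I))⁻¹ *
            ((w : ℂ) ^ 0 * cexp (-A * w ^ n / n - c * (cexp (θ * I))⁻¹ * x * w)) -
          cexp (θ * I) * ((w : ℂ) ^ 0 * cexp (-A * w ^ n / n - c * cexp (θ * I) * x * w))) := by
    rw [neg_cexp_mul_sin_eq]
    ring_nf
  rw [← integral_neg]
  simp_rw [hpointwise]
  rw [integral_const_mul, integral_sub (hK _) (hK _), integral_const_mul, integral_const_mul]
  simp only [airyMode, airyMoment, pow_zero, one_mul]

end

theorem airy_type_ode_y_minus_general
    (n : ℕ) (hn : 2 ≤ n) (c : ℝ) (hc : c ≠ 0)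
    (hcase : Odd n ∨ (Even n ∧ c < 0))
    (k : ℕ)
    (y : ℂ → ℂ)
    (hy : ∀ x : ℂ, y x =
      -∫ w in Ioi (0 : ℝ),
        Complex.exp (-(-(c : ℂ)) ^ (n - 1) * (w : ℂ) ^ n / n
            - (c : ℂ) * w * x * (Real.cos (2 * k * π / n) : ℝ)) *
          Complex.sin ((c : ℂ) * w * x * (Real.sin (2 * k * π / n) : ℝ)
            - (2 * k * π / n : ℝ))) :
    ∀ x : ℂ, iteratedDeriv (n - 1) y x + (c : ℂ) * x * y x = 0 := by
  set A : ℝ := (-c) ^ (n - 1) with hcA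
  have hA : 0 < A := by
    rcases hcase with hodd | ⟨-, hneg⟩
    · exact (Nat.Odd.sub_odd hodd odd_one).pow_pos (neg_ne_zero.mpr hc)
    · exact pow_pos (neg_pos.mpr hneg) _
  set θ : ℝ := 2 * k * π / n
  set ζ := cexp (θ * I)
  have hζ : ζ ^ n = 1 := by
    rw [← Complex.exp_nat_mul, ← exp_nat_mul_two_pi_mul_I k]
    congr 1
    have : (n : ℂ) ≠ 0 := by exact_mod_cast (by omega : n ≠ 0)
    simp only [θ]; push_cast
    field_simp
  set Y : ℕ → ℂ → ℂ := fun j x =>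
    I / 2 * (ζ⁻¹ * airyMode A n (c * ζ⁻¹) j x - ζ * airyMode A n (c * ζ) j x)
  have hyY : y = Y 0 := funext fun x => by
    rw [hy x, show (-(c : ℂ)) ^ (n - 1) = A by push_cast [hcA]; rfl]
    exact neg_integral_cexp_mul_sin_eq hA hn c θ x
  have hY (j : ℕ) (x : ℂ) : HasDerivAt (Y j) (Y (j + 1) x) x :=
    ((((hasDerivAt_airyMode hA hn _ j x).const_mul _).sub
      ((hasDerivAt_airyMode hA hn _ j x).const_mul _)).const_mul _)
  intro x
  rw [hyY, iteratedDeriv_eq_of_hasDerivAt_succ hY]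
  have h₁ := airyMode_ode hA hn hcA.symm (by rw [inv_pow, hζ, inv_one] : ζ⁻¹ ^ n = 1) x
  have h₂ := airyMode_ode hA hn hcA.symm hζ x
  linear_combination I / 2 * (h₁ - h₂)

theorem airy_type_ode_y_minus
    (n : ℕ) (hn : 2 ≤ n) (c : ℝ) (hc : c ≠ 0)
    (hcase : Odd n ∨ (Even n ∧ c < 0))
    (k : ℕ) (hk1 : 1 ≤ k) (hk2 : k ≤ n / 2)
    (y : ℂ → ℂ)
    (hy : ∀ x : ℂ, y x =
      -∫ w in Ioi (0 : ℝ),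
        Complex.exp (-(-(c : ℂ)) ^ (n - 1) * (w : ℂ) ^ n / n
            - (c : ℂ) * w * x * (Real.cos (2 * k * π / n) : ℝ)) *
          Complex.sin ((c : ℂ) * w * x * (Real.sin (2 * k * π / n) : ℝ)
            - (2 * k * π / n : ℝ))) :
    ∀ x : ℂ, iteratedDeriv (n - 1) y x + (c : ℂ) * x * y x = 0 :=
  airy_type_ode_y_minus_general n hn c hc hcase k y hy
end

section
/- Let n ≥ 2 be an integer and c a nonzero real number, with n odd or (n even and c < 0). For k = 1, …, n-1 define y_k : ℂ → ℂ by y_k(x) = ∫₀^∞ e^{-c t x - (-c)^{n-1} t^n/n} dt - e^{i 2kπ/n} ∫₀^∞ e^{-(-c)^{n-1} t^n/n - c t x e^{i 2kπ/n}} dt. Then the family of functions (y_k)_{k=1}^{n-1} is linearly independent over ℂ (as elements of the ℂ-vector space of functions ℂ → ℂ). -/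
/-!
Write `a = (-c)^(n-1) > 0` and `ω = e^{2πi/n}`. Expanding `e^{z t}` in the integrand and
integrating term by term (dominated convergence against a Gaussian, as `t^n ≥ t^2 - 1`) gives
`y_k(x) = Σ_m (-c)^m M_m / m! · (1 - ω^{k(m+1)}) x^m` with moments
`M_m = ∫₀^∞ t^m e^{-a t^n / n} dt > 0`. A linear relation among the `y_k` therefore forces
`Σ_k A_k (1 - ω^{k j}) = 0` for all `j ≥ 1`, i.e. the vector `(-Σ_k A_k, A_1, …, A_{n-1})` is
annihilated by the Vandermonde matrix of the `n`-th roots of unity, so it vanishes.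
-/

open MeasureTheory Real Set

theorem eq_zero_of_forall_hasSum_mul_pow_zero {𝕜 : Type*} [NontriviallyNormedField 𝕜]
    {b : ℕ → 𝕜} (h : ∀ x : 𝕜, HasSum (fun m => b m * x ^ m) 0) : b = 0 := by
  set p := FormalMultilinearSeries.ofScalars 𝕜 b
  have hp : HasFPowerSeriesOnBall 0 p 0 1 :=
    { r_le := p.le_radius_of_tendsto (l := 0) <| by
        simpa [p, FormalMultilinearSeries.ofScalars_norm] using
          (h 1).summable.tendsto_atTop_zero.norm
      r_pos := one_pos
      hasSum := fun {x} _ => by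
        simpa [p, FormalMultilinearSeries.ofScalars_apply_eq, mul_comm] using h x }
  exact (FormalMultilinearSeries.ofScalars_series_eq_zero 𝕜).1 hp.hasFPowerSeriesAt.eq_zero

open Matrix in
theorem IsPrimitiveRoot.linearIndependent_one_sub_pow_succ {K : Type*} [Field K] {ζ : K}
    {N : ℕ} (hζ : IsPrimitiveRoot ζ (N + 1)) :
    LinearIndependent K (fun (k : Fin N) (m : ℕ) => 1 - (ζ ^ ((k : ℕ) + 1)) ^ (m + 1)) := by
  rw [Fintype.linearIndependent_iff]
  intro A hA
  have hrel : ∀ m : ℕ, ∑ k, A k * (ζ ^ ((k : ℕ) + 1)) ^ (m + 1) = ∑ k, A k := by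
    intro m
    have := congrFun hA m
    simp only [Finset.sum_apply, Pi.smul_apply, smul_eq_mul, Pi.zero_apply, mul_sub, mul_one,
      Finset.sum_sub_distrib, sub_eq_zero] at this
    exact this.symm
  set B : Fin (N + 1) → K := Fin.cons (-∑ k, A k) A
  have hB : B ᵥ* vandermonde (fun i : Fin (N + 1) => ζ ^ (i : ℕ)) = 0 := by
    refine funext (Fin.cases ?_ fun m => ?_)
    · simp [vecMul, dotProduct, Fin.sum_univ_succ, B]
    · simp [vecMul, dotProduct, Fin.sum_univ_succ, B, hrel m]
  have hinj : Function.Injective (fun i : Fin (N + 1) => ζ ^ (i : ℕ)) :=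
    fun i j hij => Fin.ext (hζ.pow_inj i.isLt j.isLt hij)
  have hB0 : B = 0 := eq_zero_of_vecMul_eq_zero (det_vandermonde_ne_zero_iff.2 hinj) hB
  intro k
  simpa [B] using congrFun hB0 k.succ

theorem LinearIndependent.of_hasSum_mul_pow {𝕜 ι : Type*} [NontriviallyNormedField 𝕜]
    {b : ι → ℕ → 𝕜} {f : ι → 𝕜 → 𝕜} (hf : ∀ i x, HasSum (fun m => b i m * x ^ m) (f i x))
    (hb : LinearIndependent 𝕜 b) : LinearIndependent 𝕜 f := by
  rw [linearIndependent_iff'] at hb ⊢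
  refine fun s g hg => hb s g (eq_zero_of_forall_hasSum_mul_pow_zero fun x => ?_)
  have h0 : ∑ i ∈ s, g i * f i x = 0 := by simpa [Finset.sum_apply] using congrFun hg x
  have h := hasSum_sum fun i (_ : i ∈ s) => (hf i x).mul_left (g i)
  simpa [Finset.sum_mul, mul_assoc, h0] using h

theorem LinearIndependent.mul_left_apply {K ι α : Type*} [Field K] {v : ι → α → K}
    (hv : LinearIndependent K v) {d : α → K} (hd : ∀ m, d m ≠ 0) :
    LinearIndependent K (fun i m => d m * v i m) :=
  let e := LinearEquiv.piCongrRight fun m => LinearEquiv.smulOfNeZero K K (d m) (hd m)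
  hv.map' e.toLinearMap e.ker

noncomputable def powExpMoment (b : ℝ) (n m : ℕ) : ℝ :=
  ∫ t in Ioi (0 : ℝ), t ^ m * rexp (-b * t ^ n)

section
variable {a b : ℝ} {n : ℕ}

theorem sq_sub_one_le_pow {t : ℝ} (ht : 0 ≤ t) (hn : 2 ≤ n) : t ^ 2 - 1 ≤ t ^ n := by
  rcases le_total t 1 with h | h
  · nlinarith [pow_nonneg ht n]
  · linarith [pow_le_pow_right₀ h hn]

theorem integrableOn_exp_mul_sub_mul_pow (hb : 0 < b) (hn : 2 ≤ n) (r : ℝ) :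
    IntegrableOn (fun t => rexp (r * t - b * t ^ n)) (Ioi 0) := by
  refine ((integrable_cexp_quadratic (b := b) (by simpa using hb) r b).norm.integrableOn).mono'
    (by fun_prop) ((ae_restrict_iff' measurableSet_Ioi).2 (.of_forall fun t ht => ?_))
  have := sq_sub_one_le_pow (le_of_lt ht) hn
  rw [Real.norm_eq_abs, abs_of_pos (exp_pos _), Complex.norm_exp]
  refine exp_le_exp.2 ?_
  simp only [← Complex.ofReal_pow, ← Complex.ofReal_neg, ← Complex.ofReal_mul,
    ← Complex.ofReal_add, Complex.ofReal_re]
  nlinarith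

theorem powExpMoment_pos (hb : 0 < b) (hn : 0 < n) (m : ℕ) : 0 < powExpMoment b n m := by
  have h := integral_rpow_mul_exp_neg_mul_rpow (p := n) (q := m) (by exact_mod_cast hn)
    (by linarith [m.cast_nonneg (α := ℝ)]) hb
  simp only [rpow_natCast] at h
  rw [powExpMoment, h]
  positivity

theorem hasSum_pow_div_factorial_mul_powExpMoment (hb : 0 < b) (hn : 2 ≤ n) (z : ℂ) :
    HasSum (fun m => z ^ m / m.factorial * powExpMoment b n m)
      (∫ t in Ioi (0 : ℝ), Complex.exp (z * t - b * (t : ℂ) ^ n)) := by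
  have hF : ∀ m : ℕ, ∫ t in Ioi (0 : ℝ), z ^ m / m.factorial * ((t ^ m * rexp (-b * t ^ n) : ℝ) : ℂ)
      = z ^ m / m.factorial * powExpMoment b n m := fun m => by
    rw [integral_const_mul, integral_complex_ofReal, powExpMoment]
  have hbound : ∀ t : ℝ, HasSum (fun m => ‖z‖ ^ m / m.factorial * (t ^ m * rexp (-b * t ^ n)))
      (rexp (‖z‖ * t - b * t ^ n)) := fun t => by
    rw [sub_eq_add_neg, exp_add, ← neg_mul]
    refine ((exp_eq_exp_ℝ ▸ NormedSpace.expSeries_div_hasSum_exp (‖z‖ * t)).mul_right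
      (rexp (-b * t ^ n))).congr_fun fun m => ?_
    ring
  simp_rw [← hF]
  refine hasSum_integral_of_dominated_convergence
    (fun m t => ‖z‖ ^ m / m.factorial * (t ^ m * rexp (-b * t ^ n))) (fun m => by fun_prop)
    (fun m => (ae_restrict_iff' measurableSet_Ioi).2 (.of_forall fun t ht => ?_))
    (.of_forall fun t => (hbound t).summable) ?_ (.of_forall fun t => ?_)
  · rw [norm_mul, norm_div, norm_pow, Complex.norm_natCast, Complex.norm_real, Real.norm_eq_abs,
      abs_of_pos (by have : (0 : ℝ) < t := ht; positivity)]
  · simp_rw [fun t => (hbound t).tsum_eq]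
    exact integrableOn_exp_mul_sub_mul_pow hb hn _
  · rw [sub_eq_add_neg, Complex.exp_add, ← neg_mul]
    refine ((Complex.exp_eq_exp_ℂ ▸ NormedSpace.expSeries_div_hasSum_exp (z * t)).mul_right
      (Complex.exp (-b * (t : ℂ) ^ n))).congr_fun fun m => ?_
    push_cast
    ring

theorem hasSum_airyType (ha : 0 < a) (hn : 2 ≤ n) (c w x : ℂ) :
    HasSum (fun m => (-c) ^ m / m.factorial * powExpMoment (a / n) n m * (1 - w ^ (m + 1)) * x ^ m)
      ((∫ t in Ioi (0 : ℝ), Complex.exp (-c * t * x - a * (t : ℂ) ^ n / n))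
        - w * ∫ t in Ioi (0 : ℝ), Complex.exp (-a * (t : ℂ) ^ n / n - c * t * x * w)) := by
  have hb : 0 < a / n := div_pos ha (by positivity)
  have h1 := hasSum_pow_div_factorial_mul_powExpMoment hb hn (-c * x)
  have h2 := hasSum_pow_div_factorial_mul_powExpMoment hb hn (-c * x * w)
  have e1 : ∀ t : ℝ, -c * x * t - ((a / n : ℝ) : ℂ) * (t : ℂ) ^ n
      = -c * t * x - a * (t : ℂ) ^ n / n := fun t => by push_cast; ring
  have e2 : ∀ t : ℝ, -c * x * w * t - ((a / n : ℝ) : ℂ) * (t : ℂ) ^ n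
      = -a * (t : ℂ) ^ n / n - c * t * x * w := fun t => by push_cast; ring
  simp only [e1, e2] at h1 h2
  exact (h1.sub (h2.mul_left w)).congr_fun fun m => by ring

end

theorem airy_type_solutions_linearly_independent
    (n : ℕ) (hn : 2 ≤ n) (c : ℝ) (hc : c ≠ 0)
    (hcase : Odd n ∨ (Even n ∧ c < 0))
    (y : ℕ → ℂ → ℂ)
    (hy : ∀ k, 1 ≤ k → k ≤ n - 1 → ∀ x : ℂ, y k x =
      (∫ t in Ioi (0 : ℝ),
          Complex.exp (-(c : ℂ) * t * x - (-(c : ℂ)) ^ (n - 1) * (t : ℂ) ^ n / n))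
      - Complex.exp (Complex.I * (2 * k * π / n)) *
        ∫ t in Ioi (0 : ℝ),
          Complex.exp (-(-(c : ℂ)) ^ (n - 1) * (t : ℂ) ^ n / n
            - (c : ℂ) * t * x * Complex.exp (Complex.I * (2 * k * π / n)))) :
    LinearIndependent ℂ (fun k : Fin (n - 1) => y (k + 1)) := by
  set a : ℝ := (-c) ^ (n - 1)
  have ha : 0 < a := by
    rcases hcase with hodd | ⟨-, hneg⟩
    · exact (Nat.Odd.sub_odd hodd odd_one).pow_pos (neg_ne_zero.2 hc)
    · exact pow_pos (neg_pos.2 hneg) _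
  have hacast : (-(c : ℂ)) ^ (n - 1) = a := by push_cast [a]; rfl
  set ω := Complex.exp (2 * π * Complex.I / n)
  have hω : IsPrimitiveRoot ω (n - 1 + 1) := by
    rw [Nat.sub_add_cancel (by omega)]
    exact Complex.isPrimitiveRoot_exp n (by omega)
  have hseries : ∀ (k : Fin (n - 1)) (x : ℂ), HasSum (fun m => (-(c : ℂ)) ^ m / m.factorial
      * powExpMoment (a / n) n m * (1 - (ω ^ ((k : ℕ) + 1)) ^ (m + 1)) * x ^ m) (y (k + 1) x) := by
    intro k x
    have hωk : Complex.exp (Complex.I * (2 * (((k : ℕ) + 1 : ℕ) : ℂ) * π / n))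
        = ω ^ ((k : ℕ) + 1) := by
      rw [← Complex.exp_nat_mul]
      congr 1
      push_cast
      ring
    rw [hy _ (by omega) (by omega), hacast, hωk]
    exact hasSum_airyType ha hn _ _ x
  refine LinearIndependent.of_hasSum_mul_pow hseries
    (hω.linearIndependent_one_sub_pow_succ.mul_left_apply fun m => ?_)
  have hM := powExpMoment_pos (div_pos ha (by positivity : (0 : ℝ) < n)) (by omega : 0 < n) m
  simp [hc, hM.ne', Nat.factorial_ne_zero]
end

section
/- Let n ≥ 2 be an integer and c a nonzero real number, with n odd or (n even and c < 0), and let k be a natural number with 1 ≤ k ≤ ⌊n/2⌋. Then for every x ∈ ℂ, -∫₀^∞ e^{-(-c)^{n-1} w^n/n - c w x a_k} sin(c w x b_k - 2kπ/n) dw = Σ_{j=0}^∞ (-sgn(c)·x)^j / j! · sin((j+1)·2kπ/n) · Γ((j+1)/n) · (n|c|)^{(j+1)/n - 1}, and the series converges for all x ∈ ℂ. -/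
open MeasureTheory Real Set
open scoped Nat

/-! Expanding in powers of `z`,
`-exp (-z cos θ) * sin (z sin θ - θ) = ∑ (-z)^j / j! * sin ((j+1) θ)`,
both sides being `(e^{iθ} exp (-z e^{iθ}) - e^{-iθ} exp (-z e^{-iθ})) / 2i`.
Put `z = c x w` and integrate term by term against the weight
`exp (-(-c)^{n-1} w^n / n) = exp (-|c|^{n-1} w^n / n)` on `(0, ∞)`. Since `n ≥ 2`, the weight
beats `exp (|c x| w)`, which dominates the partial sums, so dominated convergence applies;
the `j`-th moment of the weight is a Gamma value, and the powers of `|c|` and `n` collect into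
`(n |c|)^{(j+1)/n - 1}`. -/

theorem Complex.hasSum_pow_div_factorial_mul_exp_pow_succ (z w : ℂ) :
    HasSum (fun j : ℕ => z ^ j / j ! * exp w ^ (j + 1)) (exp w * exp (z * exp w)) := by
  have h := (NormedSpace.expSeries_div_hasSum_exp (z * exp w)).mul_left (exp w)
  rw [← Complex.exp_eq_exp_ℂ] at h
  exact h.congr_fun fun j => by ring

theorem Complex.hasSum_neg_pow_div_factorial_mul_sin (z θ : ℂ) :
    HasSum (fun j : ℕ => (-z) ^ j / j ! * sin ((j + 1) * θ))
      (-(exp (-(z * cos θ)) * sin (z * sin θ - θ))) := by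
  have h := ((hasSum_pow_div_factorial_mul_exp_pow_succ (-z) (-θ * I)).sub
    (hasSum_pow_div_factorial_mul_exp_pow_succ (-z) (θ * I))).mul_right (I / 2)
  have e₁ : exp (-θ * I) * exp (-z * exp (-θ * I)) =
      exp (-(z * cos θ)) * exp ((z * sin θ - θ) * I) := by
    rw [← exp_add, ← exp_add, exp_mul_I, cos_neg, sin_neg]
    congr 1
    ring
  have e₂ : exp (θ * I) * exp (-z * exp (θ * I)) =
      exp (-(z * cos θ)) * exp (-(z * sin θ - θ) * I) := by
    rw [← exp_add, ← exp_add, exp_mul_I]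
    congr 1
    ring
  have hval : -(exp (-(z * cos θ)) * sin (z * sin θ - θ)) =
      (exp (-(z * cos θ)) * exp ((z * sin θ - θ) * I) -
        exp (-(z * cos θ)) * exp (-(z * sin θ - θ) * I)) * (I / 2) := by
    rw [sin]
    ring
  rw [e₁, e₂, ← hval] at h
  refine h.congr_fun fun j => ?_
  rw [← exp_nat_mul, ← exp_nat_mul, sin]
  push_cast
  ring_nf

theorem hasSum_integral_mul_of_norm_le_pow_div_factorial {μ : Measure ℝ} {a : ℕ → ℂ}
    {R : ℝ} {f g : ℝ → ℂ} (ha : ∀ j, ‖a j‖ ≤ R ^ j / j !)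
    (hf : ∀ᵐ w : ℝ ∂μ, HasSum (fun j => a j * (w : ℂ) ^ j) (f w))
    (hg : AEStronglyMeasurable g μ) (hint : Integrable (fun w => exp (R * |w|) * ‖g w‖) μ) :
    HasSum (fun j => a j * ∫ w, (w : ℂ) ^ j * g w ∂μ) (∫ w, f w * g w ∂μ) := by
  have hexp : ∀ w : ℝ,
      HasSum (fun j => (R * |w|) ^ j / j ! * ‖g w‖) (exp (R * |w|) * ‖g w‖) := by
    intro w
    rw [Real.exp_eq_exp_ℝ]
    exact (NormedSpace.expSeries_div_hasSum_exp (R * |w|)).mul_right _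
  have hbound : ∀ (j : ℕ) (w : ℝ),
      ‖a j * ((w : ℂ) ^ j * g w)‖ ≤ (R * |w|) ^ j / j ! * ‖g w‖ := by
    intro j w
    rw [norm_mul, norm_mul, norm_pow, Complex.norm_real, Real.norm_eq_abs, mul_pow, ← mul_assoc,
      mul_div_right_comm]
    gcongr
    exact ha j
  have h := hasSum_integral_of_dominated_convergence (μ := μ)
    (F := fun j w => a j * ((w : ℂ) ^ j * g w)) (f := fun w => f w * g w)
    (fun j w => (R * |w|) ^ j / j ! * ‖g w‖)
    (fun j => ((Complex.continuous_ofReal.pow j).aestronglyMeasurable.mul hg).const_mul (a j))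
    (fun j => ae_of_all _ (hbound j)) (ae_of_all _ fun w => (hexp w).summable)
    (hint.congr (ae_of_all _ fun w => (hexp w).tsum_eq.symm))
    (hf.mono fun w hw => by simpa only [mul_assoc] using hw.mul_right (g w))
  simpa only [integral_const_mul] using h

theorem sq_le_one_add_pow {w : ℝ} (hw : 0 ≤ w) {n : ℕ} (hn : 2 ≤ n) :
    w ^ 2 ≤ 1 + w ^ n := by
  rcases le_total w 1 with h | h
  · nlinarith [pow_le_one₀ hw h (n := 2), pow_nonneg hw n]
  · linarith [pow_le_pow_right₀ h hn]

theorem mul_sub_mul_pow_le {n : ℕ} (hn : 2 ≤ n) {b : ℝ} (hb : 0 < b) (R : ℝ) {w : ℝ}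
    (hw : 0 ≤ w) : R * w - b * w ^ n ≤ R ^ 2 / b + b / 4 - b / 2 * w ^ n := by
  have hamgm : R * w ≤ R ^ 2 / b + b / 4 * w ^ 2 := by
    rw [div_add' _ _ _ hb.ne', le_div_iff₀ hb]
    nlinarith [sq_nonneg (b * w - 2 * R)]
  nlinarith [sq_le_one_add_pow hw hn, pow_nonneg hw n]

theorem integrableOn_exp_mul_mul_exp_neg_mul_pow {n : ℕ} (hn : 2 ≤ n) {b : ℝ} (hb : 0 < b)
    (R : ℝ) : IntegrableOn (fun w => exp (R * w) * exp (-b * w ^ n)) (Ioi 0) := by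
  have hdom : IntegrableOn (fun w : ℝ => exp (R ^ 2 / b + b / 4) * exp (-(b / 2) * w ^ n))
      (Ioi 0) := by
    have h := integrableOn_rpow_mul_exp_neg_mul_rpow (s := 0) (p := n) (b := b / 2) (by norm_num)
      (by exact_mod_cast (by omega : 0 < n)) (by positivity)
    refine (h.congr_fun (fun w _ => ?_) measurableSet_Ioi).const_mul _
    simp only [rpow_zero, one_mul, rpow_natCast]
  refine hdom.mono' (by fun_prop)
    ((ae_restrict_iff' measurableSet_Ioi).2 (ae_of_all _ fun w hw => ?_))
  rw [norm_of_nonneg (by positivity), ← exp_add, ← exp_add]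
  exact exp_le_exp.2 (by linarith [mul_sub_mul_pow_le hn hb R (le_of_lt hw)])

theorem integral_pow_mul_exp_neg_mul_pow {n : ℕ} (hn : 0 < n) {b : ℝ} (hb : 0 < b) (j : ℕ) :
    ∫ w in Ioi (0 : ℝ), w ^ j * exp (-b * w ^ n) =
      b ^ (-((j : ℝ) + 1) / n) * (1 / n) * Gamma (((j : ℝ) + 1) / n) := by
  rw [← integral_rpow_mul_exp_neg_mul_rpow (by exact_mod_cast hn)
    (by linarith [j.cast_nonneg (α := ℝ)]) hb]
  simp only [rpow_natCast]

theorem pow_mul_rpow_pow_sub_one_div_mul_one_div {a : ℝ} (ha : 0 < a) {n : ℕ} (hn : 0 < n)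
    (j : ℕ) : a ^ j * ((a ^ (n - 1) / n) ^ (-((j : ℝ) + 1) / n) * (1 / n)) =
      (n * a) ^ (((j : ℝ) + 1) / n - 1) := by
  have hn' : (0 : ℝ) < n := by exact_mod_cast hn
  rw [rpow_def_of_pos (by positivity), rpow_def_of_pos (by positivity), ← rpow_natCast a j,
    rpow_def_of_pos ha, one_div, ← exp_log hn', ← exp_neg, ← exp_add, ← exp_add,
    exp_log hn']
  congr 1
  rw [log_div (by positivity) hn'.ne', log_pow, log_mul hn'.ne' ha.ne', Nat.cast_sub (by omega)]
  field_simp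
  ring

theorem hasSum_integral_sin_mul_exp_neg_mul_pow {n : ℕ} (hn : 2 ≤ n) {b : ℝ} (hb : 0 < b)
    (γ : ℂ) (θ : ℝ) :
    HasSum (fun j : ℕ => (-γ) ^ j / j ! * (Real.sin ((j + 1) * θ) : ℂ) *
        ∫ w in Ioi (0 : ℝ), (w : ℂ) ^ j * (exp (-b * w ^ n) : ℂ))
      (∫ w in Ioi (0 : ℝ), -(Complex.exp (-(γ * w * Real.cos θ)) *
        Complex.sin (γ * w * Real.sin θ - θ)) * (exp (-b * w ^ n) : ℂ)) := by
  have ha : ∀ j : ℕ,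
      ‖(-γ) ^ j / j ! * (Real.sin ((j + 1) * θ) : ℂ)‖ ≤ ‖γ‖ ^ j / j ! := by
    intro j
    rw [norm_mul, norm_div, norm_pow, norm_neg, Complex.norm_natCast, Complex.norm_real,
      Real.norm_eq_abs]
    exact mul_le_of_le_one_right (by positivity) (abs_sin_le_one _)
  have hf : ∀ w : ℝ,
      HasSum (fun j : ℕ => (-γ) ^ j / j ! * (Real.sin ((j + 1) * θ) : ℂ) * (w : ℂ) ^ j)
        (-(Complex.exp (-(γ * w * Real.cos θ)) * Complex.sin (γ * w * Real.sin θ - θ))) := by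
    intro w
    have h := Complex.hasSum_neg_pow_div_factorial_mul_sin (γ * w) θ
    rw [← Complex.ofReal_cos, ← Complex.ofReal_sin] at h
    refine h.congr_fun fun j => ?_
    push_cast
    ring
  have hint :
      IntegrableOn (fun w : ℝ => exp (‖γ‖ * |w|) * ‖(exp (-b * w ^ n) : ℂ)‖)
        (Ioi 0) := by
    refine (integrableOn_exp_mul_mul_exp_neg_mul_pow hn hb ‖γ‖).congr_fun (fun w hw => ?_)
      measurableSet_Ioi
    rw [Complex.norm_real, norm_of_nonneg (exp_pos _).le, abs_of_pos hw]
  exact hasSum_integral_mul_of_norm_le_pow_div_factorial ha (ae_of_all _ (hf ·)) (by fun_prop) hint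

theorem hasSum_neg_integral_exp_mul_sin {n : ℕ} (hn : 2 ≤ n) {b : ℝ} (hb : 0 < b) (γ : ℂ)
    (θ : ℝ) :
    HasSum (fun j : ℕ => (-γ) ^ j / j ! * (Real.sin ((j + 1) * θ) : ℂ) *
        (b ^ (-((j : ℝ) + 1) / n) * (1 / n) * Gamma (((j : ℝ) + 1) / n) : ℝ))
      (-∫ w in Ioi (0 : ℝ),
        Complex.exp (-(b : ℂ) * (w : ℂ) ^ n - γ * w * (Real.cos θ : ℂ)) *
          Complex.sin (γ * w * (Real.sin θ : ℂ) - (θ : ℂ))) := by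
  have hmoment : ∀ j : ℕ, ∫ w in Ioi (0 : ℝ), (w : ℂ) ^ j * (exp (-b * w ^ n) : ℂ) =
      (b ^ (-((j : ℝ) + 1) / n) * (1 / n) * Gamma (((j : ℝ) + 1) / n) : ℝ) := by
    intro j
    rw [← integral_pow_mul_exp_neg_mul_pow (by omega) hb j, ← integral_complex_ofReal]
    push_cast
    rfl
  have hexp : ∀ w : ℝ, Complex.exp (-(b : ℂ) * (w : ℂ) ^ n - γ * w * (Real.cos θ : ℂ)) =
      Complex.exp (-(γ * w * Real.cos θ)) * (exp (-b * w ^ n) : ℂ) := by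
    intro w
    rw [Complex.ofReal_exp, ← Complex.exp_add]
    push_cast
    congr 1
    ring
  have hintegrand : ∀ w : ℝ,
      -(Complex.exp (-(b : ℂ) * (w : ℂ) ^ n - γ * w * (Real.cos θ : ℂ)) *
        Complex.sin (γ * w * (Real.sin θ : ℂ) - (θ : ℂ))) =
      -(Complex.exp (-(γ * w * Real.cos θ)) * Complex.sin (γ * w * Real.sin θ - θ)) *
        (exp (-b * w ^ n) : ℂ) := by
    intro w
    rw [hexp]
    ring
  simpa only [hmoment, ← integral_neg, hintegrand] using
    hasSum_integral_sin_mul_exp_neg_mul_pow hn hb γ θ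

theorem Real.sign_mul_abs (c : ℝ) : Real.sign c * |c| = c := by
  rcases lt_trichotomy c 0 with h | rfl | h
  · rw [Real.sign_of_neg h, abs_of_neg h, neg_one_mul, neg_neg]
  · rw [abs_zero, mul_zero]
  · rw [Real.sign_of_pos h, abs_of_pos h, one_mul]

theorem hasSum_neg_integral_exp_abs_pow_mul_sin {n : ℕ} (hn : 2 ≤ n) {c : ℝ} (hc : c ≠ 0)
    (x : ℂ) (θ : ℝ) :
    HasSum
      (fun j : ℕ => ((-(Real.sign c : ℂ)) * x) ^ j / (Nat.factorial j) *
          (Real.sin (((j : ℝ) + 1) * θ) : ℝ) * (Real.Gamma (((j : ℝ) + 1) / n) : ℝ) *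
          ((((n : ℝ) * |c|) ^ (((j : ℝ) + 1) / n - 1) : ℝ) : ℂ))
      (-∫ w in Ioi (0 : ℝ),
        Complex.exp (-((|c| ^ (n - 1) : ℝ) : ℂ) * (w : ℂ) ^ n / n
            - (c : ℂ) * w * x * (Real.cos θ : ℝ)) *
          Complex.sin ((c : ℂ) * w * x * (Real.sin θ : ℝ) - (θ : ℝ))) := by
  have hc' : 0 < |c| := abs_pos.2 hc
  have h := hasSum_neg_integral_exp_mul_sin hn (b := |c| ^ (n - 1) / n) (by positivity) (c * x) θ
  have hterm : ∀ j : ℕ, (-(c * x)) ^ j / j ! * (Real.sin ((j + 1) * θ) : ℂ) *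
      ((|c| ^ (n - 1) / n) ^ (-((j : ℝ) + 1) / n) * (1 / n) * Gamma (((j : ℝ) + 1) / n) : ℝ) =
      ((-(Real.sign c : ℂ)) * x) ^ j / (Nat.factorial j) *
        (Real.sin (((j : ℝ) + 1) * θ) : ℝ) * (Real.Gamma (((j : ℝ) + 1) / n) : ℝ) *
        ((((n : ℝ) * |c|) ^ (((j : ℝ) + 1) / n - 1) : ℝ) : ℂ) := by
    intro j
    rw [← pow_mul_rpow_pow_sub_one_div_mul_one_div hc' (by omega) j]
    nth_rewrite 1 [← Real.sign_mul_abs c]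
    push_cast
    ring
  have hexponent : ∀ w : ℝ, -((|c| ^ (n - 1) / n : ℝ) : ℂ) * (w : ℂ) ^ n =
      -((|c| ^ (n - 1) : ℝ) : ℂ) * (w : ℂ) ^ n / n := by
    intro w
    push_cast
    ring
  simpa only [hterm, hexponent, mul_right_comm (c : ℂ) x] using h

theorem neg_pow_sub_one_eq_abs_pow {n : ℕ} {c : ℝ} (h : Odd n ∨ c < 0) :
    (-c) ^ (n - 1) = |c| ^ (n - 1) := by
  rcases h with hodd | hneg
  · have heven : Even (n - 1) := Nat.Odd.sub_odd hodd odd_one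
    rw [heven.neg_pow, heven.pow_abs]
  · rw [abs_of_neg hneg]

theorem airy_type_power_series_y_minus_general
    (n : ℕ) (hn : 2 ≤ n) (c : ℝ) (hc : c ≠ 0)
    (hcase : Odd n ∨ (Even n ∧ c < 0))
    (k : ℕ) (x : ℂ) :
    HasSum
      (fun j : ℕ =>
        ((-(Real.sign c : ℂ)) * x) ^ j / (Nat.factorial j) *
          (Real.sin (((j : ℝ) + 1) * (2 * k * π / n)) : ℝ) *
          (Real.Gamma (((j : ℝ) + 1) / n) : ℝ) *
          ((((n : ℝ) * |c|) ^ (((j : ℝ) + 1) / n - 1) : ℝ) : ℂ))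
      (-∫ w in Ioi (0 : ℝ),
        Complex.exp (-(-(c : ℂ)) ^ (n - 1) * (w : ℂ) ^ n / n
            - (c : ℂ) * w * x * (Real.cos (2 * k * π / n) : ℝ)) *
          Complex.sin ((c : ℂ) * w * x * (Real.sin (2 * k * π / n) : ℝ)
            - (2 * k * π / n : ℝ))) := by
  have hpow : (-(c : ℂ)) ^ (n - 1) = ((|c| ^ (n - 1) : ℝ) : ℂ) := by
    rw [← neg_pow_sub_one_eq_abs_pow (hcase.imp_right And.right)]
    push_cast
    rfl
  rw [hpow]
  exact hasSum_neg_integral_exp_abs_pow_mul_sin hn hc x (2 * k * π / n)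

theorem airy_type_power_series_y_minus
    (n : ℕ) (hn : 2 ≤ n) (c : ℝ) (hc : c ≠ 0)
    (hcase : Odd n ∨ (Even n ∧ c < 0))
    (k : ℕ) (hk1 : 1 ≤ k) (hk2 : k ≤ n / 2) (x : ℂ) :
    HasSum
      (fun j : ℕ =>
        ((-(Real.sign c : ℂ)) * x) ^ j / (Nat.factorial j) *
          (Real.sin (((j : ℝ) + 1) * (2 * k * π / n)) : ℝ) *
          (Real.Gamma (((j : ℝ) + 1) / n) : ℝ) *
          ((((n : ℝ) * |c|) ^ (((j : ℝ) + 1) / n - 1) : ℝ) : ℂ))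
      (-∫ w in Ioi (0 : ℝ),
        Complex.exp (-(-(c : ℂ)) ^ (n - 1) * (w : ℂ) ^ n / n
            - (c : ℂ) * w * x * (Real.cos (2 * k * π / n) : ℝ)) *
          Complex.sin ((c : ℂ) * w * x * (Real.sin (2 * k * π / n) : ℝ)
            - (2 * k * π / n : ℝ))) :=
  airy_type_power_series_y_minus_general n hn c hc hcase k x
end

section
/- Let n ≥ 2 be an integer and c a nonzero real number, with n odd or (n even and c < 0); let k be a natural number with 1 ≤ k < n/2, and set a_k⁺ = cos((4k+1)π/(2n)) and b_k⁺ = sin((4k+1)π/(2n)). Then for every real x with c·a_k⁺·x ≥ 0, -∫₀^∞ e^{-(-c)^{n-1} w^n/n - c w x a_k} sin(c w x b_k - 2kπ/n) dw = -∫₀^∞ e^{-c w x a_k⁺} sin( c w x b_k⁺ + (-c)^{n-1} w^n/n - (4k+1)π/(2n) ) dw. -/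
/-!
Both sides are imaginary parts of integrals of one entire function
`K(z) = exp(iα - (A/n) zⁿ - u e^{iα} z)` (with `A = (-c)^(n-1) > 0`, `u = cx`, `α = 2kπ/n`):
the right-hand side along the positive real axis and the left-hand side along the ray
`arg z = φ₀ = π/(2n)`. Since `K` has a primitive, the two integrals up to radius `R` differ by
the integral over the arc `z = R e^{iψ}, 0 ≤ ψ ≤ φ₀`. There Jordan's inequality for `cos (nψ)`,
together with `u cos (φ₀ + α) ≥ 0` and the 1-Lipschitz bound on `cos`, gives
`|K| ≤ exp ((ψ - φ₀) R m(R))` with `m(R) ≍ R^(n-1)`, so the arc contributes `O(1/m(R)) → 0`.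
-/

open MeasureTheory Real Set Filter Topology

theorem integrableOn_exp_neg_mul_pow_add_mul {A : ℝ} (hA : 0 < A) {n : ℕ} (hn : 2 ≤ n)
    (b : ℝ) :
    IntegrableOn (fun w => Real.exp (-A * w ^ n + b * w)) (Ioi 0) := by
  refine integrable_of_isBigO_exp_neg one_pos (by fun_prop : Continuous _).continuousOn
    (Asymptotics.IsBigO.of_bound 1 ?_)
  filter_upwards [eventually_ge_atTop (max 1 ((|b| + 1) / A))] with w hw
  have hw1 : 1 ≤ w := le_of_max_le_left hw
  have hAw : |b| + 1 ≤ A * w := by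
    rw [← div_le_iff₀' hA]; exact le_of_max_le_right hw
  have hsq : w ^ 2 ≤ w ^ n := pow_le_pow_right₀ hw1 hn
  have hexp : -A * w ^ n + b * w ≤ -1 * w := by
    nlinarith [le_abs_self b, mul_le_mul_of_nonneg_left hsq hA.le]
  simpa [abs_of_pos (Real.exp_pos _)] using hexp

theorem two_div_pi_mul_sub_le_cos {t : ℝ} (h0 : 0 ≤ t) (h1 : t ≤ π / 2) :
    2 / π * (π / 2 - t) ≤ Real.cos t := by
  rw [← Real.sin_pi_div_two_sub]
  exact mul_le_sin (by linarith) (by linarith)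

theorem neg_mul_cos_le_abs_mul_abs_sub {u y : ℝ} (hy : 0 ≤ u * Real.cos y) (x : ℝ) :
    -(u * Real.cos x) ≤ |u| * |x - y| := by
  have hcos := mul_le_mul_of_nonneg_left (abs_cos_sub_cos_le x y) (abs_nonneg u)
  have hdiff : -(u * (Real.cos x - Real.cos y)) ≤ |u| * |Real.cos x - Real.cos y| := by
    rw [← abs_mul]; exact neg_le_abs _
  linarith

theorem norm_intervalIntegral_le_inv_of_norm_le_mul_exp {E : Type*} [NormedAddCommGroup E]
    [NormedSpace ℝ E] {g : ℝ → E} {φ R m : ℝ} (hφ : 0 ≤ φ) (hR : 0 < R) (hm : 0 < m)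
    (hg : ∀ ψ ∈ Icc 0 φ, ‖g ψ‖ ≤ R * Real.exp ((ψ - φ) * R * m)) :
    ‖∫ ψ in (0 : ℝ)..φ, g ψ‖ ≤ m⁻¹ := by
  have hprim (ψ : ℝ) : HasDerivAt (fun ψ => Real.exp ((ψ - φ) * R * m) / m)
      (R * Real.exp ((ψ - φ) * R * m)) ψ := by
    have h := ((((hasDerivAt_id' ψ).sub_const φ).mul_const R).mul_const m).exp.div_const m
    exact h.congr_deriv (by field_simp)
  calc ‖∫ ψ in (0 : ℝ)..φ, g ψ‖
      ≤ ∫ ψ in (0 : ℝ)..φ, R * Real.exp ((ψ - φ) * R * m) :=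
        intervalIntegral.norm_integral_le_of_norm_le hφ
          (ae_of_all _ fun ψ hψ => hg ψ (Ioc_subset_Icc_self hψ))
          ((by fun_prop : Continuous _).intervalIntegrable _ _)
    _ = (1 - Real.exp (-φ * R * m)) / m := by
        rw [intervalIntegral.integral_eq_sub_of_hasDerivAt (fun ψ _ => hprim ψ)
          ((by fun_prop : Continuous _).intervalIntegrable _ _)]
        simp [sub_div]
    _ ≤ m⁻¹ := by
        rw [inv_eq_one_div]
        gcongr
        linarith [Real.exp_pos (-φ * R * m)]

section Rotation

open Complex

variable {E : Type*} [NormedAddCommGroup E] [NormedSpace ℂ E] [CompleteSpace E]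

theorem integral_ray_eq_sub_of_hasDerivAt {f g : ℂ → E} (hg : ∀ z, HasDerivAt g (f z) z)
    (hf : Continuous f) (ζ : ℂ) (R : ℝ) :
    ∫ w in (0 : ℝ)..R, ζ • f (w * ζ) = g (R * ζ) - g 0 := by
  have hderiv (w : ℝ) : HasDerivAt (fun w : ℝ => g (w * ζ)) (ζ • f (w * ζ)) w := by
    simpa [Function.comp_def] using (hg _).scomp w ((hasDerivAt_id w).ofReal_comp.mul_const ζ)
  rw [intervalIntegral.integral_eq_sub_of_hasDerivAt (fun w _ => hderiv w)
    ((by fun_prop : Continuous fun w : ℝ => ζ • f (w * ζ)).intervalIntegrable _ _)]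
  simp

theorem integral_arc_eq_sub_of_hasDerivAt {f g : ℂ → E} (hg : ∀ z, HasDerivAt g (f z) z)
    (hf : Continuous f) (R φ : ℝ) :
    ∫ ψ in (0 : ℝ)..φ, (R * exp (ψ * I) * I) • f (R * exp (ψ * I)) =
      g (R * exp (φ * I)) - g R := by
  have hderiv (ψ : ℝ) : HasDerivAt (fun ψ : ℝ => g (R * exp (ψ * I)))
      ((R * exp (ψ * I) * I) • f (R * exp (ψ * I))) ψ := by
    have := ((hasDerivAt_id ψ).ofReal_comp.mul_const I).cexp.const_mul (R : ℂ)
    simpa [Function.comp_def, mul_assoc] using (hg _).scomp ψ this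
  rw [intervalIntegral.integral_eq_sub_of_hasDerivAt (fun ψ _ => hderiv ψ)
    ((by fun_prop : Continuous fun ψ : ℝ =>
      (R * exp (ψ * I) * I) • f (R * exp (ψ * I))).intervalIntegrable _ _)]
  simp

theorem integral_rotated_ray_sub_integral_eq_integral_arc {f : ℂ → E}
    (hf : Differentiable ℂ f) (R φ : ℝ) :
    (∫ w in (0 : ℝ)..R, exp (φ * I) • f (w * exp (φ * I))) - ∫ w in (0 : ℝ)..R, f w =
      ∫ ψ in (0 : ℝ)..φ, (R * exp (ψ * I) * I) • f (R * exp (ψ * I)) := by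
  obtain ⟨g, hg⟩ := hf.isExactOn_univ
  replace hg z : HasDerivAt g (f z) z := hg z (mem_univ z)
  have hreal := integral_ray_eq_sub_of_hasDerivAt hg hf.continuous 1 R
  simp only [one_smul, mul_one] at hreal
  rw [integral_ray_eq_sub_of_hasDerivAt hg hf.continuous, hreal,
    integral_arc_eq_sub_of_hasDerivAt hg hf.continuous]
  abel

theorem tendsto_integral_rotated_ray {f : ℂ → E} (hf : Differentiable ℂ f)
    (hint : IntegrableOn (fun w : ℝ => f w) (Ioi 0)) {φ : ℝ}
    (harc : Tendsto (fun R : ℝ =>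
      ∫ ψ in (0 : ℝ)..φ, (R * exp (ψ * I) * I) • f (R * exp (ψ * I))) atTop (𝓝 0)) :
    Tendsto (fun R : ℝ => ∫ w in (0 : ℝ)..R, exp (φ * I) • f (w * exp (φ * I))) atTop
      (𝓝 (∫ w : ℝ in Ioi 0, f w)) := by
  have := (intervalIntegral_tendsto_integral_Ioi 0 hint tendsto_id).add harc
  rw [add_zero] at this
  refine this.congr fun R => ?_
  rw [← integral_rotated_ray_sub_integral_eq_integral_arc hf]
  simp

end Rotation

section Kernel
open Complex

noncomputable def airyKernel (A u α : ℝ) (n : ℕ) (z : ℂ) : ℂ :=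
  exp (α * I - (A / n : ℝ) * z ^ n - u * exp (α * I) * z)

theorem differentiable_airyKernel (A u α : ℝ) (n : ℕ) :
    Differentiable ℂ (airyKernel A u α n) := by
  unfold airyKernel; fun_prop

theorem exp_mul_I_mul_airyKernel (A u α : ℝ) (n : ℕ) (w φ : ℝ) :
    exp (φ * I) * airyKernel A u α n (w * exp (φ * I)) =
      exp ((-(A / n) * w ^ n * Real.cos (n * φ) - u * w * Real.cos (φ + α) : ℝ) +
        (α + φ - A / n * w ^ n * Real.sin (n * φ) - u * w * Real.sin (φ + α) : ℝ) * I) := by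
  rw [airyKernel, ← Complex.exp_add, mul_pow, ← Complex.exp_nat_mul]
  congr 1
  have hpow : (n : ℂ) * (φ * I) = ((n * φ : ℝ) : ℂ) * I := by push_cast; ring
  have hlin :
      u * exp (α * I) * (w * exp (φ * I)) = (u * w : ℝ) * exp ((φ + α : ℝ) * I) := by
    rw [mul_mul_mul_comm, ← Complex.exp_add]; push_cast; ring_nf
  rw [hpow, hlin, exp_ofReal_mul_I, exp_ofReal_mul_I]
  push_cast
  ring

theorem norm_exp_mul_I_mul_airyKernel (A u α : ℝ) (n : ℕ) (w φ : ℝ) :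
    ‖exp (φ * I) * airyKernel A u α n (w * exp (φ * I))‖ =
      Real.exp (-(A / n) * w ^ n * Real.cos (n * φ) - u * w * Real.cos (φ + α)) := by
  rw [exp_mul_I_mul_airyKernel, norm_exp, add_re, ofReal_re, mul_I_re, ofReal_im, neg_zero,
    add_zero]

theorem im_exp_mul_I_mul_airyKernel (A u α : ℝ) (n : ℕ) (w φ : ℝ) :
    (exp (φ * I) * airyKernel A u α n (w * exp (φ * I))).im =
      Real.exp (-(A / n) * w ^ n * Real.cos (n * φ) - u * w * Real.cos (φ + α)) *
        Real.sin (α + φ - A / n * w ^ n * Real.sin (n * φ) - u * w * Real.sin (φ + α)) := by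
  rw [exp_mul_I_mul_airyKernel, exp_im, add_re, ofReal_re, mul_I_re, ofReal_im, neg_zero,
    add_zero, add_im, ofReal_im, mul_I_im, ofReal_re, zero_add]

theorem im_airyKernel_ofReal (A u α : ℝ) (n : ℕ) (w : ℝ) :
    (airyKernel A u α n w).im =
      Real.exp (-(A / n) * w ^ n - u * w * Real.cos α) * Real.sin (α - u * w * Real.sin α) := by
  simpa using im_exp_mul_I_mul_airyKernel A u α n w 0

theorem integrableOn_airyKernel {A : ℝ} (hA : 0 < A) (u α : ℝ) {n : ℕ} (hn : 2 ≤ n) :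
    IntegrableOn (fun w : ℝ => airyKernel A u α n w) (Ioi 0) := by
  refine (integrableOn_exp_neg_mul_pow_add_mul (by positivity : 0 < A / n) hn
    (-(u * Real.cos α))).mono' ?_ (ae_of_all _ fun w => ?_)
  · exact ((differentiable_airyKernel A u α n).continuous.comp
      continuous_ofReal).aestronglyMeasurable
  · simpa [neg_mul, ← sub_eq_add_neg, mul_right_comm u] using
      (norm_exp_mul_I_mul_airyKernel A u α n w 0).le

theorem airyKernel_arc_exponent_le {A u α φ₀ ψ R : ℝ} {n : ℕ} (hA : 0 ≤ A) (hn : 1 ≤ n)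
    (hφ₀ : n * φ₀ = π / 2) (hu : 0 ≤ u * Real.cos (φ₀ + α)) (hψ : ψ ∈ Icc 0 φ₀)
    (hR : 0 ≤ R) :
    -(A / n) * R ^ n * Real.cos (n * ψ) - u * R * Real.cos (ψ + α) ≤
      (ψ - φ₀) * R * (2 * A / π * R ^ (n - 1) - |u|) := by
  have hn' : (0 : ℝ) < n := by exact_mod_cast hn
  have hjordan : 2 / π * (n * (φ₀ - ψ)) ≤ Real.cos (n * ψ) := by
    have := two_div_pi_mul_sub_le_cos (t := n * ψ) (by nlinarith [hψ.1])
      (by nlinarith [hψ.2])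
    rwa [mul_sub, hφ₀]
  have hlin : -(u * Real.cos (ψ + α)) ≤ |u| * (φ₀ - ψ) := by
    have := neg_mul_cos_le_abs_mul_abs_sub hu (ψ + α)
    rwa [add_sub_add_right_eq_sub, abs_of_nonpos (sub_nonpos.2 hψ.2), neg_sub] at this
  have hRn : R ^ n = R ^ (n - 1) * R := by rw [← pow_succ, Nat.sub_add_cancel hn]
  calc -(A / n) * R ^ n * Real.cos (n * ψ) - u * R * Real.cos (ψ + α)
      ≤ -(A / n) * R ^ n * (2 / π * (n * (φ₀ - ψ))) + R * (|u| * (φ₀ - ψ)) := by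
        have := mul_le_mul_of_nonneg_left hjordan (by positivity : 0 ≤ A / n * R ^ n)
        nlinarith [mul_le_mul_of_nonneg_left hlin hR]
    _ = (ψ - φ₀) * R * (2 * A / π * R ^ (n - 1) - |u|) := by
        rw [hRn]; field_simp; ring

theorem tendsto_integral_arc_airyKernel {A u α φ₀ : ℝ} {n : ℕ} (hA : 0 < A) (hn : 2 ≤ n)
    (hφ₀ : n * φ₀ = π / 2) (hu : 0 ≤ u * Real.cos (φ₀ + α)) :
    Tendsto (fun R : ℝ => ∫ ψ in (0 : ℝ)..φ₀,
      (R * exp (ψ * I) * I) • airyKernel A u α n (R * exp (ψ * I))) atTop (𝓝 0) := by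
  have hφ₀_nonneg : 0 ≤ φ₀ := nonneg_of_mul_nonneg_right (a := (n : ℝ))
    (by rw [hφ₀]; positivity) (by exact_mod_cast (by omega : 0 < n))
  set m : ℝ → ℝ := fun R => 2 * A / π * R ^ (n - 1) - |u|
  have hm : Tendsto m atTop atTop :=
    tendsto_atTop_add_const_right _ _
      ((tendsto_pow_atTop (by omega)).const_mul_atTop (by positivity))
  refine squeeze_zero_norm' ?_ hm.inv_tendsto_atTop
  filter_upwards [eventually_gt_atTop 0, hm.eventually_gt_atTop 0] with R hR hmR
  refine norm_intervalIntegral_le_inv_of_norm_le_mul_exp hφ₀_nonneg hR hmR fun ψ hψ => ?_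
  have hnorm : ‖(R * exp (ψ * I) * I) • airyKernel A u α n (R * exp (ψ * I))‖ =
      R * ‖exp (ψ * I) * airyKernel A u α n (R * exp (ψ * I))‖ := by
    simp only [smul_eq_mul, norm_mul, norm_I, mul_one, norm_real, Real.norm_of_nonneg hR.le]
    ring
  rw [hnorm, norm_exp_mul_I_mul_airyKernel]
  gcongr
  exact airyKernel_arc_exponent_le hA.le (by omega) hφ₀ hu hψ hR.le

end Kernel

theorem airy_type_alternative_integral_form_general
    (n : ℕ) (hn : 2 ≤ n) (c : ℝ) (hc : c ≠ 0)
    (hcase : Odd n ∨ (Even n ∧ c < 0))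
    (k : ℕ)
    (x : ℝ) (hx : 0 ≤ c * Real.cos ((4 * k + 1) * π / (2 * n)) * x) :
    Tendsto
      (fun R : ℝ =>
        -∫ w in Ioc (0 : ℝ) R,
          Real.exp (-(c * w * x * Real.cos ((4 * k + 1) * π / (2 * n)))) *
            Real.sin (c * w * x * Real.sin ((4 * k + 1) * π / (2 * n))
              + (-c) ^ (n - 1) * w ^ n / n - (4 * k + 1) * π / (2 * n)))
      atTop
      (𝓝 (-∫ w in Ioi (0 : ℝ),
        Real.exp (-(-c) ^ (n - 1) * w ^ n / n - c * w * x * Real.cos (2 * k * π / n)) *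
          Real.sin (c * w * x * Real.sin (2 * k * π / n) - 2 * k * π / n))) := by
  have hA : 0 < (-c) ^ (n - 1) := by
    rcases hcase with hodd | ⟨-, hneg⟩
    · exact (Nat.Odd.sub_odd hodd odd_one).pow_pos (neg_ne_zero.mpr hc)
    · exact pow_pos (neg_pos.mpr hneg) _
  have hn₀ : (n : ℝ) ≠ 0 := by positivity
  have hφ₀ : n * (π / (2 * n)) = π / 2 := by field_simp
  have hθ : (4 * k + 1) * π / (2 * n) = π / (2 * n) + 2 * k * π / n := by field_simp; ring
  set φ₀ : ℝ := π / (2 * n)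
  set α : ℝ := 2 * k * π / n
  set K := airyKernel ((-c) ^ (n - 1)) (c * x) α n
  rw [hθ] at hx ⊢
  have hK : Continuous K := (differentiable_airyKernel _ _ _ _).continuous
  have hint := integrableOn_airyKernel hA (c * x) α hn
  have hrot := tendsto_integral_rotated_ray (differentiable_airyKernel _ _ _ _) hint
    (tendsto_integral_arc_airyKernel hA hn hφ₀ (by rwa [mul_right_comm]))
  convert ((Complex.continuous_im.tendsto _).comp hrot).congr' ?_ using 2
  · rw [← integral_neg]
    refine (setIntegral_congr_fun measurableSet_Ioi fun w _ => ?_).trans (integral_im hint)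
    rw [RCLike.im_to_complex, im_airyKernel_ofReal, ← mul_neg, ← Real.sin_neg]
    congr 2 <;> ring
  filter_upwards [eventually_ge_atTop 0] with R hR
  rw [Function.comp_apply, intervalIntegral.integral_of_le hR, ← integral_neg]
  have hcont : Continuous fun w : ℝ =>
      Complex.exp (φ₀ * Complex.I) • K (w * Complex.exp (φ₀ * Complex.I)) := by fun_prop
  refine ((setIntegral_congr_fun measurableSet_Ioc fun w _ => ?_).trans
    (integral_im (hcont.integrableOn_Ioc (μ := volume)))).symm
  rw [RCLike.im_to_complex, smul_eq_mul, im_exp_mul_I_mul_airyKernel, hφ₀, Real.cos_pi_div_two,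
    Real.sin_pi_div_two, ← mul_neg, ← Real.sin_neg]
  congr 2 <;> ring

theorem airy_type_alternative_integral_form
    (n : ℕ) (hn : 2 ≤ n) (c : ℝ) (hc : c ≠ 0)
    (hcase : Odd n ∨ (Even n ∧ c < 0))
    (k : ℕ) (hk1 : 1 ≤ k) (hk2 : 2 * k < n)
    (x : ℝ) (hx : 0 ≤ c * Real.cos ((4 * k + 1) * π / (2 * n)) * x) :
    Tendsto
      (fun R : ℝ =>
        -∫ w in Ioc (0 : ℝ) R,
          Real.exp (-(c * w * x * Real.cos ((4 * k + 1) * π / (2 * n)))) *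
            Real.sin (c * w * x * Real.sin ((4 * k + 1) * π / (2 * n))
              + (-c) ^ (n - 1) * w ^ n / n - (4 * k + 1) * π / (2 * n)))
      atTop
      (𝓝 (-∫ w in Ioi (0 : ℝ),
        Real.exp (-(-c) ^ (n - 1) * w ^ n / n - c * w * x * Real.cos (2 * k * π / n)) *
          Real.sin (c * w * x * Real.sin (2 * k * π / n) - 2 * k * π / n))) :=
  airy_type_alternative_integral_form_general n hn c hc hcase k x hx
end

section
/- Let n ≥ 2 be an integer and c a nonzero real number, with n odd or (n even and c < 0), and let θ ∈ [0, π] be such that c·cos θ ≥ 0. Then the iterated integral ∫₀^∞ ( -∫₀^∞ e^{-(-c)^{n-1} t^n/n - c t x cos θ} sin( c t x sin θ - θ ) dt ) dx exists (in the improper sense in x) and equals (π - θ)/(-c) when c < 0, and equals θ/c when c > 0. -/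
/-!
Put `b = (-c) ^ (n - 1) / n > 0`. For fixed `t > 0` the `x`-integrand has the elementary
antiderivative `-exp (-c t x cos θ) sin (c t x sin θ) / (c t)`, so by Fubini the integral over
`x ∈ (0, R]` is `c⁻¹ ∫₀^∞ exp (-b tⁿ - R α t) sin (R β t) / t dt` with `α + β i = c e^{iθ}`.
Splitting `exp (-b tⁿ) = (exp (-b tⁿ) - exp (-t)) + exp (-t)`, the first part brings in the
integrable kernel `(exp (-b tⁿ) - exp (-t)) / t`, whose damped oscillatory integral vanishes as
`R → ∞` (dominated convergence if `α > 0`, Riemann–Lebesgue if `α = 0`), while the second is the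
Laplace transform `arctan (R β / (1 + R α)) = arg (R⁻¹ + α + β i)`, which tends to `arg (c e^{iθ})`.
-/

open MeasureTheory Real Set Filter Topology

theorem integral_exp_neg_mul_mul_cos {p : ℝ} (hp : 0 < p) (y : ℝ) :
    ∫ t in Ioi 0, exp (-p * t) * cos (y * t) = p / (p ^ 2 + y ^ 2) := by
  have ha : (-p + y * Complex.I).re < 0 := by simpa using hp
  have hre := integral_re (integrableOn_exp_mul_complex_Ioi ha 0)
  simp only [RCLike.re_to_complex, Complex.exp_re] at hre
  rw [integral_exp_mul_complex_Ioi ha 0] at hre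
  convert hre using 1
  · simp
  · simp [Complex.div_re, Complex.normSq_apply, ← pow_two]

theorem integral_exp_neg_mul_mul_sin_div {p : ℝ} (hp : 0 < p) (q : ℝ) :
    ∫ t in Ioi 0, exp (-p * t) * sin (q * t) / t = arctan (q / p) := by
  set F : ℝ → ℝ → ℝ := fun t s => q * (exp (-p * t) * cos (q * s * t))
  have hF : Integrable (Function.uncurry F)
      ((volume.restrict (Ioi 0)).prod (volume.restrict (Ioc 0 1))) := by
    refine Integrable.mono' (((exp_neg_integrableOn_Ioi 0 hp).const_mul |q|).mul_prod
      (integrable_const (1 : ℝ))) (by fun_prop) (.of_forall fun ⟨t, s⟩ => ?_)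
    simpa [F, abs_mul, mul_assoc] using mul_le_mul_of_nonneg_left (abs_cos_le_one (q * s * t))
      (mul_nonneg (abs_nonneg q) (exp_pos (-p * t)).le)
  have hsin : ∀ t ∈ Ioi (0 : ℝ), exp (-p * t) * sin (q * t) / t = ∫ s in Ioc 0 1, F t s := by
    intro t ht
    have hderiv : ∀ s ∈ uIcc (0 : ℝ) 1,
        HasDerivAt (fun s => exp (-p * t) * sin (q * s * t) / t) (F t s) s := by
      intro s _
      refine ((((hasDerivAt_const_mul q).mul_const t).sin.const_mul
        (exp (-p * t))).div_const t).congr_deriv ?_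
      simp only [F]
      field_simp [(mem_Ioi.mp ht).ne']
    rw [← intervalIntegral.integral_of_le zero_le_one,
      intervalIntegral.integral_eq_sub_of_hasDerivAt hderiv
        ((by fun_prop : Continuous (F t)).intervalIntegrable 0 1)]
    simp
  have hcos : ∀ s, ∫ t in Ioi 0, F t s = q * p / (p ^ 2 + (q * s) ^ 2) := by
    intro s
    rw [integral_const_mul, integral_exp_neg_mul_mul_cos hp]
    ring
  have harctan : ∀ s ∈ uIcc (0 : ℝ) 1,
      HasDerivAt (fun s => arctan (q * s / p)) (q * p / (p ^ 2 + (q * s) ^ 2)) s := by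
    intro s _
    convert ((hasDerivAt_const_mul q).div_const p).arctan using 1
    field_simp [hp.ne']
  rw [setIntegral_congr_fun measurableSet_Ioi hsin, integral_integral_swap hF]
  simp_rw [hcos]
  rw [← intervalIntegral.integral_of_le zero_le_one,
    intervalIntegral.integral_eq_sub_of_hasDerivAt harctan]
  · simp
  · exact (continuous_const.div (by fun_prop) fun s => by positivity).intervalIntegrable 0 1

theorem integrableOn_exp_neg_mul_mul_sin_div {p : ℝ} (hp : 0 < p) (q : ℝ) :
    IntegrableOn (fun t : ℝ => exp (-p * t) * sin (q * t) / t) (Ioi 0) := by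
  refine Integrable.mono' ((exp_neg_integrableOn_Ioi 0 hp).const_mul |q|)
    (by fun_prop : Measurable _).aestronglyMeasurable
    ((ae_restrict_mem measurableSet_Ioi).mono fun t (ht : 0 < t) => ?_)
  rw [norm_div, norm_mul, norm_of_nonneg (exp_pos _).le, norm_of_nonneg ht.le, div_le_iff₀ ht,
    norm_eq_abs]
  calc exp (-p * t) * |sin (q * t)| ≤ exp (-p * t) * (|q| * t) := by
        gcongr
        simpa [abs_mul, abs_of_pos ht] using abs_sin_le_abs (x := q * t)
    _ = |q| * exp (-p * t) * t := by ring

theorem arctan_div_eq_arg {x : ℝ} (hx : 0 < x) (y : ℝ) :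
    arctan (y / x) = Complex.arg (x + y * Complex.I) := by
  have h := Complex.abs_arg_lt_pi_div_two_iff.mpr
    (Or.inl (by simpa using hx) : 0 < (x + y * Complex.I).re ∨ _)
  rw [abs_lt] at h
  rw [← arctan_tan h.1 h.2, Complex.tan_arg]
  simp

theorem tendsto_arctan_mul_div_one_add_mul {α β : ℝ} (hα : 0 ≤ α) (hαβ : 0 < α ∨ β ≠ 0) :
    Tendsto (fun M : ℝ => arctan (M * β / (1 + M * α))) atTop
      (𝓝 (Complex.arg (α + β * Complex.I))) := by
  have hslit : (α + β * Complex.I : ℂ) ∈ Complex.slitPlane := by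
    simpa [Complex.mem_slitPlane_iff] using hαβ
  have hlim : Tendsto (fun M : ℝ => ((M⁻¹ : ℝ) : ℂ) + α + β * Complex.I) atTop
      (𝓝 (α + β * Complex.I)) := by
    have := ((Complex.continuous_ofReal.tendsto 0).comp tendsto_inv_atTop_zero).add_const
      ((α : ℂ) + β * Complex.I)
    simpa [add_assoc] using this
  refine ((Complex.continuousAt_arg hslit).tendsto.comp hlim).congr' ?_
  filter_upwards [eventually_gt_atTop 0] with M hM
  have h1 : (0 : ℝ) < 1 + M * α := by positivity
  rw [Function.comp_apply, arctan_div_eq_arg h1, ← Complex.arg_real_mul _ hM]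
  congr 1
  have hM' : (M : ℂ) ≠ 0 := Complex.ofReal_ne_zero.mpr hM.ne'
  push_cast
  field_simp

theorem tendsto_integral_mul_sin_cocompact {g : ℝ → ℝ} (hg : Integrable g) :
    Tendsto (fun w : ℝ => ∫ t, g t * sin (w * t)) (cocompact ℝ) (𝓝 0) := by
  have hscale : Tendsto (fun w : ℝ => -(2 * π)⁻¹ * w) (cocompact ℝ) (cocompact ℝ) :=
    tendsto_cocompact_mul_left₀ (by simp [pi_ne_zero])
  have h := (Complex.continuous_im.tendsto 0).comp
    ((Real.tendsto_integral_exp_smul_cocompact (fun t => (g t : ℂ))).comp hscale)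
  refine h.congr fun w => ?_
  have hchar : ∀ t : ℝ, (fourierChar (-(t * (-(2 * π)⁻¹ * w))) : ℂ) =
      Complex.exp ((w * t : ℝ) * Complex.I) := by
    intro t
    rw [fourierChar_apply]
    congr 2
    push_cast
    field_simp
  have hint : Integrable (fun t => (fourierChar (-(t * (-(2 * π)⁻¹ * w))) : ℂ) * g t) :=
    hg.ofReal.bdd_mul (c := 1) (by fun_prop) (.of_forall fun t => (Circle.norm_coe _).le)
  simp only [Function.comp_apply, Circle.smul_def, smul_eq_mul]
  rw [← Complex.imCLM_apply, ← ContinuousLinearMap.integral_comp_comm _ hint]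
  congr 1 with t
  rw [hchar, Complex.imCLM_apply, Complex.mul_im, Complex.exp_ofReal_mul_I_re,
    Complex.exp_ofReal_mul_I_im]
  simp [mul_comm]

theorem tendsto_setIntegral_mul_exp_neg_mul_sin {g : ℝ → ℝ} (hg : IntegrableOn g (Ioi 0))
    {α β : ℝ} (hα : 0 ≤ α) (hαβ : 0 < α ∨ β ≠ 0) :
    Tendsto (fun M : ℝ => ∫ t in Ioi 0, g t * (exp (-(M * α * t)) * sin (M * β * t)))
      atTop (𝓝 0) := by
  rcases hα.lt_or_eq with hα | rfl
  · have hbound : ∀ M t, ‖g t * (exp (-(M * α * t)) * sin (M * β * t))‖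
        ≤ ‖g t‖ * exp (-(M * α * t)) := fun M t => by
      rw [norm_mul, norm_mul, norm_of_nonneg (exp_pos _).le, mul_assoc]
      gcongr
      exact mul_le_of_le_one_right (exp_pos _).le (abs_sin_le_one _)
    have hdom : ∀ M, 0 ≤ M → ∀ t ∈ Ioi (0 : ℝ), ‖g t‖ * exp (-(M * α * t)) ≤ ‖g t‖ :=
      fun M hM t (ht : 0 < t) => mul_le_of_le_one_right (norm_nonneg _)
        (exp_le_one_iff.mpr (neg_nonpos.mpr (by positivity)))
    have hdecay : ∀ t ∈ Ioi (0 : ℝ), Tendsto (fun M => ‖g t‖ * exp (-(M * α * t))) atTop (𝓝 0) := by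
      intro t (ht : 0 < t)
      have hlin : Tendsto (fun M : ℝ => M * α * t) atTop atTop := by
        simpa only [mul_assoc, id] using tendsto_id.atTop_mul_const (mul_pos hα ht)
      simpa using (tendsto_exp_neg_atTop_nhds_zero.comp hlin).const_mul ‖g t‖
    simpa using tendsto_integral_filter_of_dominated_convergence (fun t => ‖g t‖)
      (.of_forall fun M => hg.aestronglyMeasurable.mul (by fun_prop))
      ((eventually_ge_atTop 0).mono fun M hM => (ae_restrict_mem measurableSet_Ioi).mono
        fun t ht => (hbound M t).trans (hdom M hM t ht)) hg.norm
      ((ae_restrict_mem measurableSet_Ioi).mono fun t ht =>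
        squeeze_zero_norm (hbound · t) (hdecay t ht))
  · have hβ : β ≠ 0 := hαβ.resolve_left (lt_irrefl 0)
    have hRL := (tendsto_integral_mul_sin_cocompact
      (hg.integrable_indicator measurableSet_Ioi)).comp
        ((tendsto_cocompact_mul_right₀ hβ).mono_left atTop_le_cocompact)
    refine hRL.congr fun M => ?_
    simp only [Function.comp_apply, mul_zero, zero_mul, neg_zero, exp_zero, one_mul]
    rw [← integral_indicator measurableSet_Ioi]
    congr 1 with t
    by_cases ht : t ∈ Ioi 0 <;> simp [ht]

theorem integrableOn_exp_neg_mul_pow_Ioi {b : ℝ} (hb : 0 < b) {n : ℕ} (hn : 1 ≤ n) :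
    IntegrableOn (fun t : ℝ => exp (-b * t ^ n)) (Ioi 0) := by
  refine (integrableOn_rpow_mul_exp_neg_mul_rpow (s := 0) (p := n) (by norm_num)
    (by exact_mod_cast hn) hb).congr_fun (fun t _ => ?_) measurableSet_Ioi
  simp [rpow_natCast]

theorem abs_exp_neg_sub_exp_neg_le {x y : ℝ} (hx : 0 ≤ x) (hy : 0 ≤ y) :
    |exp (-x) - exp (-y)| ≤ x + y := by
  have := one_sub_le_exp_neg x
  have := one_sub_le_exp_neg y
  have := exp_le_one_iff.mpr (neg_nonpos.mpr hx)
  have := exp_le_one_iff.mpr (neg_nonpos.mpr hy)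
  rw [abs_le]
  constructor <;> linarith

theorem integrableOn_exp_neg_mul_pow_sub_exp_neg_div {b : ℝ} (hb : 0 < b) {n : ℕ} (hn : 1 ≤ n) :
    IntegrableOn (fun t : ℝ => (exp (-b * t ^ n) - exp (-t)) / t) (Ioi 0) := by
  have hmeas : AEStronglyMeasurable (fun t : ℝ => (exp (-b * t ^ n) - exp (-t)) / t) :=
    (by fun_prop : Measurable _).aestronglyMeasurable
  rw [← Ioc_union_Ioi_eq_Ioi zero_le_one]
  refine IntegrableOn.union ?_ ?_
  · refine Integrable.mono' (integrableOn_const (C := b + 1) measure_Ioc_lt_top.ne) hmeas.restrict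
      ((ae_restrict_mem measurableSet_Ioc).mono fun t ⟨ht0, ht1⟩ => ?_)
    have hpow : t ^ n ≤ t := pow_le_of_le_one ht0.le ht1 (by omega)
    have := abs_exp_neg_sub_exp_neg_le (mul_nonneg hb.le (pow_nonneg ht0.le n)) ht0.le
    rw [norm_div, norm_of_nonneg ht0.le, div_le_iff₀ ht0, norm_eq_abs, neg_mul]
    nlinarith
  · refine Integrable.mono' (((integrableOn_exp_neg_mul_pow_Ioi hb hn).mono_set
      (Ioi_subset_Ioi zero_le_one)).add (exp_neg_integrableOn_Ioi 1 one_pos)) hmeas.restrict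
      ((ae_restrict_mem measurableSet_Ioi).mono fun t (ht : 1 < t) => ?_)
    rw [norm_div, norm_of_nonneg (by linarith : (0:ℝ) ≤ t), div_le_iff₀ (by linarith)]
    have := abs_sub (exp (-b * t ^ n)) (exp (-t))
    simp only [Pi.add_apply, norm_eq_abs, neg_one_mul, abs_of_pos (exp_pos _)] at this ⊢
    nlinarith [exp_pos (-b * t ^ n), exp_pos (-t)]

theorem tendsto_integral_exp_neg_mul_pow_mul_sin_div {b : ℝ} (hb : 0 < b) {n : ℕ} (hn : 1 ≤ n)
    {α β : ℝ} (hα : 0 ≤ α) (hαβ : 0 < α ∨ β ≠ 0) :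
    Tendsto (fun M : ℝ => ∫ t in Ioi 0, exp (-b * t ^ n - M * α * t) * sin (M * β * t) / t)
      atTop (𝓝 (Complex.arg (α + β * Complex.I))) := by
  set g := fun t : ℝ => (exp (-b * t ^ n) - exp (-t)) / t
  have hg : IntegrableOn g (Ioi 0) := integrableOn_exp_neg_mul_pow_sub_exp_neg_div hb hn
  have hsplit : ∀ M : ℝ, 0 ≤ M →
      (∫ t in Ioi 0, g t * (exp (-(M * α * t)) * sin (M * β * t))) + arctan (M * β / (1 + M * α))
        = ∫ t in Ioi 0, exp (-b * t ^ n - M * α * t) * sin (M * β * t) / t := by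
    intro M hM
    have hp : 0 < 1 + M * α := by positivity
    have hbdd : ∀ᵐ t ∂(volume.restrict (Ioi (0 : ℝ))),
        ‖exp (-(M * α * t)) * sin (M * β * t)‖ ≤ 1 := by
      refine (ae_restrict_mem measurableSet_Ioi).mono fun t (ht : 0 < t) => ?_
      rw [norm_mul, norm_of_nonneg (exp_pos _).le]
      exact mul_le_one₀ (exp_le_one_iff.mpr (neg_nonpos.mpr (by positivity))) (norm_nonneg _)
        (abs_sin_le_one _)
    rw [← integral_exp_neg_mul_mul_sin_div hp, ← integral_add
      (hg.mul_bdd (by fun_prop) hbdd) (integrableOn_exp_neg_mul_mul_sin_div hp _)]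
    refine setIntegral_congr_fun measurableSet_Ioi fun t (ht : 0 < t) => ?_
    have h₁ : exp (-b * t ^ n - M * α * t) = exp (-b * t ^ n) * exp (-(M * α * t)) := by
      rw [← exp_add]; ring_nf
    have h₂ : exp (-(1 + M * α) * t) = exp (-t) * exp (-(M * α * t)) := by
      rw [← exp_add]; ring_nf
    rw [h₁, h₂]
    simp only [g]
    field_simp
    ring
  have hlim := (tendsto_setIntegral_mul_exp_neg_mul_sin hg hα hαβ).add
    (tendsto_arctan_mul_div_one_add_mul hα hαβ)
  rw [zero_add] at hlim
  exact hlim.congr' ((eventually_ge_atTop 0).mono hsplit)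

theorem hasDerivAt_exp_neg_mul_cos_mul_sin_mul_div {r : ℝ} (hr : r ≠ 0) (θ x : ℝ) :
    HasDerivAt (fun x => exp (-(r * cos θ * x)) * sin (r * sin θ * x) / r)
      (-(exp (-(r * cos θ * x)) * sin (r * sin θ * x - θ))) x := by
  refine (((hasDerivAt_const_mul (r * cos θ)).neg.exp.mul
    (hasDerivAt_const_mul (r * sin θ)).sin).div_const r).congr_deriv ?_
  simp only [Pi.neg_apply, sin_sub]
  field_simp
  ring

theorem integral_Ioc_neg_integral_Ioi_exp_mul_sin_sub {b : ℝ} (hb : 0 < b) {n : ℕ} (hn : 1 ≤ n)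
    {c θ : ℝ} (hc : c ≠ 0) (hθc : 0 ≤ c * cos θ) {R : ℝ} (hR : 0 ≤ R) :
    ∫ x in Ioc 0 R, -∫ t in Ioi 0,
        exp (-b * t ^ n - c * t * x * cos θ) * sin (c * t * x * sin θ - θ)
      = (∫ t in Ioi 0, exp (-b * t ^ n - R * (c * cos θ) * t) * sin (R * (c * sin θ) * t) / t)
          / c := by
  set f : ℝ → ℝ → ℝ := fun x t =>
    exp (-b * t ^ n - c * t * x * cos θ) * sin (c * t * x * sin θ - θ)
  have hf : Integrable (Function.uncurry f)
      ((volume.restrict (Ioc 0 R)).prod (volume.restrict (Ioi 0))) := by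
    refine Integrable.mono' ((integrableOn_const (C := (1 : ℝ)) measure_Ioc_lt_top.ne).mul_prod
      (integrableOn_exp_neg_mul_pow_Ioi hb hn)) (by fun_prop) ?_
    rw [Measure.prod_restrict]
    filter_upwards [ae_restrict_mem (measurableSet_Ioc.prod measurableSet_Ioi)] with ⟨x, t⟩ hxt
    obtain ⟨⟨hx, -⟩, ht⟩ := hxt
    rw [mem_Ioi] at ht
    have hdamp : exp (-b * t ^ n - c * t * x * cos θ) ≤ exp (-b * t ^ n) :=
      exp_le_exp.mpr (by nlinarith [mul_nonneg (mul_nonneg ht.le hx.le) hθc])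
    simp only [Function.uncurry_apply_pair, f, norm_mul, norm_of_nonneg (exp_pos _).le, one_mul]
    exact (mul_le_of_le_one_right (exp_pos _).le (abs_sin_le_one _)).trans hdamp
  rw [integral_neg, integral_integral_swap hf, ← integral_neg, ← integral_div]
  refine setIntegral_congr_fun measurableSet_Ioi fun t (ht : 0 < t) => ?_
  have hct : c * t ≠ 0 := mul_ne_zero hc ht.ne'
  have hderiv : ∀ x ∈ uIcc 0 R, HasDerivAt
      (fun x => exp (-b * t ^ n) * (exp (-(c * t * cos θ * x)) * sin (c * t * sin θ * x) / (c * t)))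
      (-f x t) x := fun x _ => by
    refine ((hasDerivAt_exp_neg_mul_cos_mul_sin_mul_div hct θ x).const_mul
      (exp (-b * t ^ n))).congr_deriv ?_
    simp only [f, sub_eq_add_neg (-b * t ^ n), exp_add]
    ring_nf
  rw [← intervalIntegral.integral_of_le hR, ← intervalIntegral.integral_neg,
    intervalIntegral.integral_eq_sub_of_hasDerivAt hderiv
    ((by fun_prop : Continuous fun x => -f x t).intervalIntegrable 0 R)]
  simp only [mul_zero, neg_zero, exp_zero, sin_zero, zero_div, sub_eq_add_neg, exp_add]
  field_simp
  ring_nf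

theorem arg_mul_cos_add_mul_sin_mul_I_div {c θ : ℝ} (hc : c ≠ 0) (hθ : θ ∈ Icc 0 π)
    (hθc : 0 ≤ c * cos θ) :
    Complex.arg (↑(c * cos θ) + ↑(c * sin θ) * Complex.I) / c
      = if c < 0 then (π - θ) / (-c) else θ / c := by
  split_ifs with hneg
  · have hθ0 : 0 < θ := hθ.1.lt_of_ne fun h => by
      rw [← h, cos_zero, mul_one] at hθc; linarith
    have h := Complex.arg_mul_cos_add_sin_mul_I (neg_pos.mpr hneg)
      (⟨by linarith, by linarith [hθ.2]⟩ : θ - π ∈ Ioc (-π) π)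
    rw [← Complex.ofReal_cos, ← Complex.ofReal_sin, cos_sub_pi, sin_sub_pi] at h
    rw [show (↑(c * cos θ) + ↑(c * sin θ) * Complex.I : ℂ)
      = ↑(-c) * (↑(-cos θ) + ↑(-sin θ) * Complex.I) by push_cast; ring, h]
    field_simp
    ring
  · have h := Complex.arg_mul_cos_add_sin_mul_I ((not_lt.mp hneg).lt_of_ne hc.symm)
      (⟨by linarith [pi_pos, hθ.1], hθ.2⟩ : θ ∈ Ioc (-π) π)
    rw [← Complex.ofReal_cos, ← Complex.ofReal_sin] at h
    rw [show (↑(c * cos θ) + ↑(c * sin θ) * Complex.I : ℂ)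
      = ↑c * (↑(cos θ) + ↑(sin θ) * Complex.I) by push_cast; ring, h]

theorem airy_type_integral_on_positive_halfline
    (n : ℕ) (hn : 2 ≤ n) (c : ℝ) (hc : c ≠ 0)
    (hcase : Odd n ∨ (Even n ∧ c < 0))
    (θ : ℝ) (hθ : θ ∈ Icc 0 π) (hθc : 0 ≤ c * Real.cos θ) :
    Tendsto
      (fun R : ℝ =>
        ∫ x in Ioc (0 : ℝ) R,
          -∫ t in Ioi (0 : ℝ),
            Real.exp (-(-c) ^ (n - 1) * t ^ n / n - c * t * x * Real.cos θ) *
              Real.sin (c * t * x * Real.sin θ - θ))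
      atTop
      (𝓝 (if c < 0 then (π - θ) / (-c) else θ / c)) := by
  have hn1 : 1 ≤ n := by omega
  have hb : 0 < (-c) ^ (n - 1) / n := by
    refine div_pos ?_ (by positivity)
    rcases hcase with ⟨k, rfl⟩ | ⟨-, hneg⟩
    · exact Even.pow_pos ⟨k, by omega⟩ (neg_ne_zero.mpr hc)
    · exact pow_pos (neg_pos.mpr hneg) _
  have hαβ : 0 < c * cos θ ∨ c * sin θ ≠ 0 := by
    refine hθc.lt_or_eq.imp_right fun hcos hsin => hc ?_
    linear_combination -c * sin_sq_add_cos_sq θ + sin θ * hsin - cos θ * hcos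
  have hlim := (tendsto_integral_exp_neg_mul_pow_mul_sin_div hb hn1 hθc hαβ).div_const c
  rw [arg_mul_cos_add_mul_sin_mul_I_div hc hθ hθc] at hlim
  refine hlim.congr' ((eventually_ge_atTop 0).mono fun R hR => ?_)
  rw [← integral_Ioc_neg_integral_Ioi_exp_mul_sin_sub hb hn1 hc hθc hR]
  simp only [mul_div_right_comm, neg_div]
end
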